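/- arXiv:2111.06386 — 5 statements merged into one kernel-verified Lean document; each statement's English description precedes it below -/
import Mathlib

section
/- Let n be a positive integer and let τ₁, ..., τ_n be reals satisfying τ_i ≥ α > 0 for all i, let β ≥ α, let b > 0 and c > 0, and let γ ∈ [0,1] be such that n·γ is an integer and the number of indices i with τ_i < β is at most n·γ. Let G₁, ..., G_n be independent random variables with G_i distributed as N(0, τ_i). Then Pr( Σ_{i=1}^n G_i² ≤ n·(1+c)·b ) ≤ exp(−n·γ·λ²/8) + exp(−n·(1−γ)·λ²/8), where λ = max( 0, 1 − (1+c)·b / (γ·α + (1−γ)·β) ). -/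
open MeasureTheory ProbabilityTheory Real Finset
open scoped NNReal

open scoped ENNReal

lemma gauss_exp_sq_integral {s v : ℝ} (hs : 0 ≤ s) (hv : 0 < v) :
    ∫ x, Real.exp (-(s * x ^ 2)) ∂(gaussianReal 0 v.toNNReal)
      = (Real.sqrt (1 + 2 * s * v))⁻¹ := by
  have hvne : v.toNNReal ≠ 0 := by
    simp [Real.toNNReal_eq_zero]; linarith
  have hvc : ((v.toNNReal : ℝ≥0) : ℝ) = v := Real.coe_toNNReal _ hv.le
  rw [gaussianReal_of_var_ne_zero 0 hvne, gaussianPDF_def]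
  rw [show (fun x => ENNReal.ofReal (gaussianPDFReal 0 v.toNNReal x))
      = (fun x => ((Real.toNNReal (gaussianPDFReal 0 v.toNNReal x) : ℝ≥0) : ℝ≥0∞)) from rfl]
  rw [integral_withDensity_eq_integral_smul
    ((measurable_gaussianPDFReal 0 v.toNNReal).real_toNNReal)]
  have hk : (0:ℝ) < s + (2*v)⁻¹ := by positivity
  set k : ℝ := s + (2*v)⁻¹ with hkdef
  have h1 : ∀ x : ℝ, (Real.toNNReal (gaussianPDFReal 0 v.toNNReal x)) • Real.exp (-(s * x ^ 2))
      = (Real.sqrt (2 * π * v))⁻¹ * Real.exp (-k * x ^ 2) := by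
    intro x
    rw [NNReal.smul_def, smul_eq_mul, Real.coe_toNNReal _ (gaussianPDFReal_nonneg _ _ _)]
    rw [gaussianPDFReal, hvc]
    rw [mul_assoc, ← Real.exp_add]
    congr 1
    rw [hkdef]
    field_simp
    ring
  simp_rw [h1]
  rw [integral_const_mul, integral_gaussian]
  rw [inv_mul_eq_div, ← Real.sqrt_div (by positivity) (2 * π * v),
    show π / k / (2 * π * v) = (1 + 2 * s * v)⁻¹ by
      rw [hkdef]; field_simp; ring, Real.sqrt_inv]

lemma integral_pi_prod : ∀ {n : ℕ} (μ : Fin n → Measure ℝ),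
    (∀ i, SigmaFinite (μ i)) → ∀ (f : Fin n → ℝ → ℝ),
    ∫ x, ∏ i, f i (x i) ∂(Measure.pi μ) = ∏ i, ∫ y, f i y ∂(μ i) := by
  intro n
  induction n with
  | zero =>
    intro μ hσ f
    rw [Measure.pi_of_empty]
    simp
  | succ m ih =>
    intro μ hσ f
    haveI := hσ
    calc
      ∫ x, ∏ i, f i (x i) ∂(Measure.pi μ)
          = ∫ x : ℝ × (Fin m → ℝ), f 0 x.1 * ∏ i : Fin m, f i.succ (x.2 i)
            ∂((μ 0).prod (Measure.pi fun i => μ i.succ)) := by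
        rw [← ((measurePreserving_piFinSuccAbove μ 0).symm).integral_comp']
        simp_rw [MeasurableEquiv.piFinSuccAbove_symm_apply, Fin.insertNthEquiv,
          Fin.prod_univ_succ, Fin.insertNth_zero, Equiv.coe_fn_mk, Fin.cons_succ,
          Fin.zero_succAbove, Fin.cons_zero, cast_eq]
      _ = (∫ y, f 0 y ∂(μ 0)) * ∏ i : Fin m, ∫ y, f i.succ y ∂(μ i.succ) := by
        rw [← ih (fun i => μ i.succ) (fun i => inferInstance) (fun i => f i.succ),
          ← integral_prod_mul]
      _ = ∏ i, ∫ y, f i y ∂(μ i) := by rw [Fin.prod_univ_succ]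

lemma unit_ineq {lam : ℝ} (h0 : 0 ≤ lam) (h1 : lam ≤ 1) :
    Real.exp (lam * (1 - lam) / 2) * (Real.sqrt (1 + lam))⁻¹ ≤ Real.exp (-lam ^ 2 / 8) := by
  have hll : 0 ≤ lam * (1 - lam) := mul_nonneg h0 (by linarith)
  have hsq : (0:ℝ) < Real.sqrt (1 + lam) := Real.sqrt_pos.2 (by linarith)
  have key : Real.exp (lam * (1 - lam) / 2 + lam ^ 2 / 8) ≤ Real.sqrt (1 + lam) := by
    set y : ℝ := lam / 2 - 3 * lam ^ 2 / 8 with hy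
    have hyval : lam * (1 - lam) / 2 + lam ^ 2 / 8 = y := by rw [hy]; ring
    have hy0 : 0 ≤ y := by rw [hy]; nlinarith [hll]
    have hyl : y ≤ lam / 2 := by rw [hy]; nlinarith [sq_nonneg lam]
    have hy1 : y ≤ 1 := by rw [hy]; nlinarith [sq_nonneg lam]
    have hexp := Real.exp_bound' hy0 hy1 (n := 3) (by norm_num)
    have hexp' : Real.exp y ≤ 1 + y + y ^ 2 / 2 + 2 * y ^ 3 / 9 := by
      have hs3 : (∑ m ∈ Finset.range 3, y ^ m / m.factorial) = 1 + y + y ^ 2 / 2 := by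
        simp [Finset.sum_range_succ, Nat.factorial]
      rw [hs3] at hexp
      calc Real.exp y ≤ 1 + y + y ^ 2 / 2 + y ^ 3 * (3 + 1) / ((3:ℕ).factorial * 3) := hexp
        _ = 1 + y + y ^ 2 / 2 + 2 * y ^ 3 / 9 := by
            push_cast [Nat.factorial]; ring
    have hy2 : y ^ 2 ≤ (lam / 2) ^ 2 := pow_le_pow_left₀ hy0 hyl 2
    have hy3 : y ^ 3 ≤ (lam / 2) ^ 3 := pow_le_pow_left₀ hy0 hyl 3
    have hl3 : lam ^ 3 ≤ lam ^ 2 := by nlinarith [mul_nonneg (mul_nonneg h0 h0) (sub_nonneg.2 h1)]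
    have hmid : 1 + y + y ^ 2 / 2 + 2 * y ^ 3 / 9 ≤ 1 + lam / 2 - lam ^ 2 / 8 := by
      rw [hy] at hy2 hy3 ⊢
      nlinarith [hy2, hy3, hl3]
    have hsqrt : 1 + lam / 2 - lam ^ 2 / 8 ≤ Real.sqrt (1 + lam) := by
      have h' : (0:ℝ) ≤ 1 + lam / 2 - lam ^ 2 / 8 := by nlinarith [sq_nonneg lam]
      rw [Real.le_sqrt h' (by linarith)]
      have hl4 : lam ^ 4 ≤ lam ^ 3 := by
        nlinarith [mul_nonneg (mul_nonneg (mul_nonneg h0 h0) h0) (sub_nonneg.2 h1)]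
      nlinarith [hl4, pow_nonneg h0 3]
    calc Real.exp (lam * (1 - lam) / 2 + lam ^ 2 / 8) = Real.exp y := by rw [hyval]
      _ ≤ _ := hexp'.trans (hmid.trans hsqrt)
  calc Real.exp (lam * (1 - lam) / 2) * (Real.sqrt (1 + lam))⁻¹
      = Real.exp (lam * (1 - lam) / 2 + lam ^ 2 / 8) * Real.exp (-lam ^ 2 / 8)
        * (Real.sqrt (1 + lam))⁻¹ := by rw [← Real.exp_add]; ring_nf
    _ ≤ Real.sqrt (1 + lam) * Real.exp (-lam ^ 2 / 8) * (Real.sqrt (1 + lam))⁻¹ := by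
        gcongr
    _ = Real.exp (-lam ^ 2 / 8) := by field_simp

open scoped Classical in
lemma chernoff_group {n : ℕ} (τ : Fin n → ℝ) (hτpos : ∀ i, 0 < τ i)
    (A : Finset (Fin n)) (a : ℝ) (ha : 0 < a) (hA : ∀ i ∈ A, a ≤ τ i)
    (lam : ℝ) (hl0 : 0 ≤ lam) (hl1 : lam ≤ 1) :
    ((Measure.pi fun i => gaussianReal 0 (τ i).toNNReal)
        {x | ∑ i ∈ A, (x i) ^ 2 ≤ (1 - lam) * A.card * a}).toReal
      ≤ Real.exp (-(A.card : ℝ) * lam ^ 2 / 8) := by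
  set μ : Measure (Fin n → ℝ) := Measure.pi fun i => gaussianReal 0 (τ i).toNNReal with hμ
  haveI : IsProbabilityMeasure μ := by
    rw [hμ]; infer_instance
  set s : ℝ := lam / (2 * a) with hsdef
  have hs : 0 ≤ s := by positivity
  have hsa : 2 * s * a = lam := by rw [hsdef]; field_simp
  set Y : (Fin n → ℝ) → ℝ := fun x => ∑ i ∈ A, (x i) ^ 2 with hY
  have hYmeas : Measurable Y := by
    apply Finset.measurable_sum
    intro i _
    exact (measurable_pi_apply i).pow_const 2
  have hY0 : ∀ x, 0 ≤ Y x := fun x => Finset.sum_nonneg fun i _ => sq_nonneg _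
  set t : ℝ := (1 - lam) * A.card * a with ht
  set g : (Fin n → ℝ) → ℝ := fun x => Real.exp (-(s * Y x)) with hg
  have hgmeas : Measurable g := (hYmeas.const_mul s).neg.exp
  have hg0 : ∀ x, 0 ≤ g x := fun x => (Real.exp_pos _).le
  have hg1 : ∀ x, g x ≤ 1 := fun x => Real.exp_le_one_iff.2 (by
    have := mul_nonneg hs (hY0 x); linarith)
  have hgint : Integrable g μ := by
    refine (integrable_const (1:ℝ)).mono' hgmeas.aestronglyMeasurable ?_
    filter_upwards with x
    rw [Real.norm_eq_abs, abs_of_nonneg (hg0 x)]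
    exact hg1 x
  have hE : MeasurableSet {x : Fin n → ℝ | Y x ≤ t} := hYmeas measurableSet_Iic
  -- Markov step
  have markov : Real.exp (-(s * t)) * (μ {x | Y x ≤ t}).toReal ≤ ∫ x, g x ∂μ := by
    have h1 : ∫ x in {x | Y x ≤ t}, Real.exp (-(s * t)) ∂μ
        ≤ ∫ x in {x | Y x ≤ t}, g x ∂μ := by
      refine setIntegral_mono_on (integrableOn_const (measure_ne_top _ _))
        (hgint.integrableOn) hE ?_
      intro x hx
      rw [hg]
      exact Real.exp_le_exp.2 (by
        have hxx : Y x ≤ t := hx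
        nlinarith [hs, hxx])
    have h2 : ∫ x in {x | Y x ≤ t}, g x ∂μ ≤ ∫ x, g x ∂μ :=
      setIntegral_le_integral hgint (Filter.Eventually.of_forall hg0)
    rw [setIntegral_const] at h1
    rw [smul_eq_mul, mul_comm] at h1
    rw [measureReal_def] at h1
    linarith
  -- product formula and bound
  have hprod : ∫ x, g x ∂μ = ∏ i, ∫ y, (if i ∈ A then Real.exp (-(s * y ^ 2)) else 1)
      ∂(gaussianReal 0 (τ i).toNNReal) := by
    rw [hμ, ← integral_pi_prod _ (fun i => inferInstance)]
    congr 1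
    ext x
    rw [hg]
    calc Real.exp (-(s * Y x)) = Real.exp (∑ i ∈ A, -(s * (x i) ^ 2)) := by
          rw [hY, Finset.mul_sum, ← Finset.sum_neg_distrib]
      _ = ∏ i ∈ A, Real.exp (-(s * (x i) ^ 2)) := Real.exp_sum A _
      _ = ∏ i, (if i ∈ A then Real.exp (-(s * (x i) ^ 2)) else 1) := by
          rw [Finset.prod_ite_mem, Finset.univ_inter]
  have hcoord : ∀ i : Fin n, ∫ y, (if i ∈ A then Real.exp (-(s * y ^ 2)) else 1)
      ∂(gaussianReal 0 (τ i).toNNReal)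
      = if i ∈ A then (Real.sqrt (1 + 2 * s * τ i))⁻¹ else 1 := by
    intro i
    by_cases hi : i ∈ A
    · simp only [if_pos hi]
      exact gauss_exp_sq_integral hs (hτpos i)
    · simp [if_neg hi]
  have hfacbound : ∀ i : Fin n,
      (if i ∈ A then (Real.sqrt (1 + 2 * s * τ i))⁻¹ else 1)
        ≤ (if i ∈ A then (Real.sqrt (1 + lam))⁻¹ else 1) := by
    intro i
    by_cases hi : i ∈ A
    · simp only [if_pos hi]
      have h1 : (0:ℝ) < 1 + lam := by linarith
      have h2 : 1 + lam ≤ 1 + 2 * s * τ i := by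
        have := hA i hi
        nlinarith [hs, hsa]
      exact inv_anti₀ (Real.sqrt_pos.2 h1) (Real.sqrt_le_sqrt h2)
    · simp [if_neg hi]
  have hIbound : ∫ x, g x ∂μ ≤ ((Real.sqrt (1 + lam))⁻¹) ^ A.card := by
    rw [hprod]
    calc ∏ i, ∫ y, (if i ∈ A then Real.exp (-(s * y ^ 2)) else 1)
          ∂(gaussianReal 0 (τ i).toNNReal)
        = ∏ i, (if i ∈ A then (Real.sqrt (1 + 2 * s * τ i))⁻¹ else 1) := by
          exact Finset.prod_congr rfl fun i _ => hcoord i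
      _ ≤ ∏ i, (if i ∈ A then (Real.sqrt (1 + lam))⁻¹ else 1) := by
          refine Finset.prod_le_prod (fun i _ => ?_) (fun i _ => hfacbound i)
          by_cases hi : i ∈ A <;> simp [hi] <;> positivity
      _ = ((Real.sqrt (1 + lam))⁻¹) ^ A.card := by
          rw [Finset.prod_ite_mem, Finset.univ_inter, Finset.prod_const]
  -- combine
  have hP : (μ {x | Y x ≤ t}).toReal
      ≤ Real.exp (s * t) * ((Real.sqrt (1 + lam))⁻¹) ^ A.card := by
    have h := markov.trans hIbound
    have h2 := mul_le_mul_of_nonneg_left h (Real.exp_pos (s * t)).le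
    rw [← mul_assoc, ← Real.exp_add] at h2
    simpa using h2
  have hst : s * t = (A.card : ℝ) * (lam * (1 - lam) / 2) := by
    rw [ht, hsdef]
    field_simp
  have hfinal : Real.exp (s * t) * ((Real.sqrt (1 + lam))⁻¹) ^ A.card
      ≤ Real.exp (-(A.card : ℝ) * lam ^ 2 / 8) := by
    rw [hst]
    rw [Real.exp_nat_mul, ← mul_pow]
    have h8 : Real.exp (-(A.card : ℝ) * lam ^ 2 / 8)
        = (Real.exp (-lam ^ 2 / 8)) ^ A.card := by
      rw [← Real.exp_nat_mul]
      congr 1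
      ring
    rw [h8]
    refine pow_le_pow_left₀ ?_ (unit_ineq hl0 hl1) A.card
    positivity
  exact hP.trans hfinal

open scoped Classical in
/-- Let `τ_i ≥ α > 0`, `β ≥ α`, `b, c > 0`, and `γ ∈ [0,1]` with `nγ` an integer and
`|{i : τ_i < β}| ≤ nγ`. For independent `G_i ~ N(0,τ_i)` (modeled by the product measure),
`Pr(Σ G_i² ≤ n(1+c)b) ≤ exp(−nγλ²/8) + exp(−n(1−γ)λ²/8)` where
`λ = max(0, 1 − (1+c)b/(γα+(1−γ)β))`. -/
theorem gaussian_sum_squares_lower_tail_mixed (n : ℕ) (hn : 0 < n)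
    (τ : Fin n → ℝ) (α : ℝ) (hα : 0 < α) (hτ : ∀ i, α ≤ τ i)
    (β : ℝ) (hβ : α ≤ β) (b c : ℝ) (hb : 0 < b) (hc : 0 < c)
    (γ : ℝ) (hγ0 : 0 ≤ γ) (hγ1 : γ ≤ 1)
    (hint : ∃ m : ℕ, (m : ℝ) = (n : ℝ) * γ)
    (hcard : ((Finset.univ.filter (fun i => τ i < β)).card : ℝ) ≤ (n : ℝ) * γ)
    (lam : ℝ) (hlam : lam = max 0 (1 - (1 + c) * b / (γ * α + (1 - γ) * β))) :
    ((Measure.pi fun i => gaussianReal 0 (τ i).toNNReal)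
        {x | ∑ i, (x i) ^ 2 ≤ (n : ℝ) * (1 + c) * b}).toReal
      ≤ Real.exp (-(n : ℝ) * γ * lam ^ 2 / 8)
        + Real.exp (-(n : ℝ) * (1 - γ) * lam ^ 2 / 8) := by
  have hτpos : ∀ i, 0 < τ i := fun i => hα.trans_le (hτ i)
  have hβpos : 0 < β := lt_of_lt_of_le hα hβ
  set D : ℝ := γ * α + (1 - γ) * β with hD
  have hDpos : 0 < D := by
    have h1 : γ * α + (1 - γ) * α ≤ D := by
      rw [hD]
      have : (1 - γ) * α ≤ (1 - γ) * β := by nlinarith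
      linarith
    nlinarith
  have hl0 : 0 ≤ lam := hlam ▸ le_max_left _ _
  have hl1 : lam ≤ 1 := by
    rw [hlam]
    have : 0 ≤ (1 + c) * b / D := by positivity
    apply max_le (by norm_num)
    linarith
  rcases eq_or_lt_of_le hl0 with h0 | hpos
  · -- lam = 0 : trivial bound by 2
    have h1 : ((Measure.pi fun i => gaussianReal 0 (τ i).toNNReal)
        {x : Fin n → ℝ | ∑ i, (x i) ^ 2 ≤ (n : ℝ) * (1 + c) * b}).toReal ≤ 1 := by
      haveI : IsProbabilityMeasure (Measure.pi fun i => gaussianReal 0 (τ i).toNNReal) :=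
        inferInstance
      exact ENNReal.toReal_mono ENNReal.one_ne_top prob_le_one
    rw [← h0]
    norm_num
    linarith
  have hzpos : 0 < 1 - (1 + c) * b / D := by
    by_contra hz
    push_neg at hz
    rw [hlam, max_eq_left hz] at hpos
    exact lt_irrefl _ hpos
  have hlamz : lam = 1 - (1 + c) * b / D := by
    rw [hlam, max_eq_right hzpos.le]
  have hkey : (1 + c) * b = (1 - lam) * D := by
    rw [hlamz]
    field_simp
    ring
  obtain ⟨m, hm⟩ := hint
  have hmn : m ≤ n := by
    have : (m : ℝ) ≤ (n : ℝ) := by rw [hm]; nlinarith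
    exact_mod_cast this
  set S : Finset (Fin n) := Finset.univ.filter (fun i => τ i < β) with hS
  have hScard : S.card ≤ m := by
    have : (S.card : ℝ) ≤ (m : ℝ) := by rw [hm]; exact hcard
    exact_mod_cast this
  obtain ⟨A, hSA, hAuniv, hAcard⟩ :=
    Finset.exists_subsuperset_card_eq (Finset.subset_univ S) hScard
      (by simpa using hmn)
  have hτB : ∀ i ∈ Aᶜ, β ≤ τ i := by
    intro i hi
    rw [Finset.mem_compl] at hi
    by_contra hlt
    exact hi (hSA (by simp [hS, lt_of_not_ge hlt]))
  have hBcard : (Aᶜ : Finset (Fin n)).card = n - m := by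
    rw [Finset.card_compl, hAcard, Fintype.card_fin]
  set μ : Measure (Fin n → ℝ) := Measure.pi fun i => gaussianReal 0 (τ i).toNNReal with hμ
  haveI : IsProbabilityMeasure μ := by rw [hμ]; infer_instance
  -- event inclusion
  have hsub : {x : Fin n → ℝ | ∑ i, (x i) ^ 2 ≤ (n : ℝ) * (1 + c) * b}
      ⊆ {x | ∑ i ∈ A, (x i) ^ 2 ≤ (1 - lam) * A.card * α}
        ∪ {x | ∑ i ∈ Aᶜ, (x i) ^ 2 ≤ (1 - lam) * (Aᶜ : Finset (Fin n)).card * β} := by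
    intro x hx
    simp only [Set.mem_setOf_eq] at hx
    by_contra hcon
    simp only [Set.mem_union, Set.mem_setOf_eq, not_or, not_le] at hcon
    obtain ⟨h1, h2⟩ := hcon
    have hsplit : ∑ i ∈ A, (x i) ^ 2 + ∑ i ∈ Aᶜ, (x i) ^ 2 = ∑ i, (x i) ^ 2 :=
      Finset.sum_add_sum_compl A _
    have hcards : ((Aᶜ : Finset (Fin n)).card : ℝ) = (n : ℝ) - (m : ℝ) := by
      rw [hBcard, Nat.cast_sub hmn]
    have hAc : (A.card : ℝ) = (m : ℝ) := by rw [hAcard]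
    have hDsum : (m : ℝ) * α + ((n : ℝ) - (m : ℝ)) * β = (n : ℝ) * D := by
      rw [hm, hD]; ring
    have hnkey : (n : ℝ) * ((1 + c) * b) = (1 - lam) * ((n : ℝ) * D) := by
      rw [hkey]; ring
    rw [hAc] at h1
    rw [hcards] at h2
    have hmul : (1 - lam) * ((m : ℝ) * α) + (1 - lam) * (((n : ℝ) - (m : ℝ)) * β)
        = (1 - lam) * ((n : ℝ) * D) := by linear_combination (1 - lam) * hDsum
    have hx' : ∑ i, (x i) ^ 2 ≤ (n : ℝ) * ((1 + c) * b) := by linarith [hx]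
    linarith [h1, h2, hsplit, hmul, hnkey, hx']
  have hmono : μ {x : Fin n → ℝ | ∑ i, (x i) ^ 2 ≤ (n : ℝ) * (1 + c) * b}
      ≤ μ {x | ∑ i ∈ A, (x i) ^ 2 ≤ (1 - lam) * A.card * α}
        + μ {x | ∑ i ∈ Aᶜ, (x i) ^ 2 ≤ (1 - lam) * (Aᶜ : Finset (Fin n)).card * β} :=
    (measure_mono hsub).trans (measure_union_le _ _)
  have hfin1 : μ {x | ∑ i ∈ A, (x i) ^ 2 ≤ (1 - lam) * A.card * α} ≠ ⊤ :=
    measure_ne_top _ _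
  have hfin2 : μ {x | ∑ i ∈ Aᶜ, (x i) ^ 2 ≤ (1 - lam) * (Aᶜ : Finset (Fin n)).card * β} ≠ ⊤ :=
    measure_ne_top _ _
  have htoReal : (μ {x : Fin n → ℝ | ∑ i, (x i) ^ 2 ≤ (n : ℝ) * (1 + c) * b}).toReal
      ≤ (μ {x | ∑ i ∈ A, (x i) ^ 2 ≤ (1 - lam) * A.card * α}).toReal
        + (μ {x | ∑ i ∈ Aᶜ, (x i) ^ 2 ≤ (1 - lam) * (Aᶜ : Finset (Fin n)).card * β}).toReal := by
    rw [← ENNReal.toReal_add hfin1 hfin2]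
    exact ENNReal.toReal_mono (ENNReal.add_ne_top.2 ⟨hfin1, hfin2⟩) hmono
  have hc1 := chernoff_group τ hτpos A α hα (fun i _ => hτ i) lam hl0 hl1
  have hc2 := chernoff_group τ hτpos Aᶜ β hβpos hτB lam hl0 hl1
  have he1 : Real.exp (-(A.card : ℝ) * lam ^ 2 / 8)
      = Real.exp (-(n : ℝ) * γ * lam ^ 2 / 8) := by
    congr 1
    rw [hAcard, hm]; ring
  have he2 : Real.exp (-((Aᶜ : Finset (Fin n)).card : ℝ) * lam ^ 2 / 8)
      = Real.exp (-(n : ℝ) * (1 - γ) * lam ^ 2 / 8) := by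
    congr 1
    rw [hBcard, Nat.cast_sub hmn, hm]; ring
  rw [he1] at hc1
  rw [he2] at hc2
  calc _ ≤ _ := htoReal
    _ ≤ _ := add_le_add hc1 hc2
end

section
/- Let ρ_Δ, ρ_Adv, ρ_Dec > 0 and δ > 0, and define τ*(a) = a²·ρ_Δ·ρ_Adv/(a²·ρ_Δ + ρ_Adv) + ρ_Dec for a ∈ [0,1]. Let γ ∈ (1/2,1), let ℓ be a positive integer with γ·ℓ an integer, let 0 ≤ k < d ≤ 1, and let f : {1,...,ℓ} → [0,1] be such that for every i either f(i) = k or f(i) ≥ d, and the number of indices i with f(i) = k is at most γ·ℓ. Let G₁, ..., G_ℓ be independent random variables with G_i distributed as N(0, τ*(f(i))). Then Pr( Σ_{i=1}^ℓ G_i² ≤ ℓ·(1+δ)·(k²·ρ_Δ + ρ_Dec) ) ≤ exp(−ℓ·γ·λ²/8) + exp(−ℓ·(1−γ)·λ²/8), where λ = max( 0, 1 − (1+δ)·(k²·ρ_Δ + ρ_Dec) / (γ·τ*(k) + (1−γ)·τ*(d)) ). -/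
open MeasureTheory ProbabilityTheory Real Finset
open scoped NNReal

/-- `τ*(a) = a²ρ_Δρ_Adv/(a²ρ_Δ + ρ_Adv) + ρ_Dec`. -/
noncomputable def tauStar (ρΔ ρAdv ρDec a : ℝ) : ℝ :=
  a ^ 2 * ρΔ * ρAdv / (a ^ 2 * ρΔ + ρAdv) + ρDec

open scoped ENNReal

lemma log_ge_sub_sq {x : ℝ} (hx : 0 ≤ x) : x - x^2/2 ≤ Real.log (1+x) := by
  set f : ℝ → ℝ := fun y => Real.log (1+y) - (y - y^2/2) with hf
  have hder : ∀ y ∈ Set.Ioi (0:ℝ), HasDerivAt f (1/(1+y) - (1 - y)) y := by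
    intro y hy
    have h1 : (0:ℝ) < 1 + y := by simp at hy; linarith
    have hlog : HasDerivAt (fun y : ℝ => Real.log (1+y)) (1/(1+y)) y := by
      have := ((hasDerivAt_id y).const_add 1).log h1.ne'
      simpa [one_div] using this
    have hpoly : HasDerivAt (fun y : ℝ => y - y^2/2) (1 - y) y := by
      have h2 : HasDerivAt (fun y : ℝ => y^2/2) y y := by
        have := (hasDerivAt_pow 2 y).div_const 2
        simpa using this
      exact (hasDerivAt_id' y).sub h2
    exact hlog.sub hpoly
  have hmono : MonotoneOn f (Set.Ici (0:ℝ)) := by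
    apply monotoneOn_of_deriv_nonneg (convex_Ici 0)
    · apply ContinuousOn.sub
      · apply ContinuousOn.log (by fun_prop)
        intro y hy; simp at hy; positivity
      · fun_prop
    · intro y hy
      rw [interior_Ici] at hy
      exact (hder y hy).differentiableAt.differentiableWithinAt
    · intro y hy
      rw [interior_Ici] at hy
      have := (hder y hy).deriv
      rw [this]
      have h1 : (0:ℝ) < 1 + y := by simp at hy; linarith
      rw [sub_nonneg, le_div_iff₀ h1]
      nlinarith [sq_nonneg y]
  have := hmono Set.self_mem_Ici hx hx
  simp only [hf] at this
  simp at this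
  linarith

lemma gaussian_exp_sq_integral (v : ℝ≥0) (hv : v ≠ 0) (s : ℝ) (hs : 0 ≤ s) :
    ∫ x, Real.exp (-(s * x^2)) ∂(gaussianReal 0 v) = 1 / Real.sqrt (1 + 2*s*v) := by
  have hv' : (0:ℝ) < v := by positivity
  rw [gaussianReal_of_var_ne_zero _ hv]
  have hpdf : (gaussianPDF 0 v) = fun x => ((gaussianPDFReal 0 v x).toNNReal : ℝ≥0∞) := rfl
  rw [hpdf, integral_withDensity_eq_integral_smul
      ((measurable_gaussianPDFReal 0 v).real_toNNReal)]
  have heq : ∀ x : ℝ, (gaussianPDFReal 0 v x).toNNReal • Real.exp (-(s * x^2))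
      = (Real.sqrt (2 * π * v))⁻¹ * Real.exp (-(s + (2*v)⁻¹) * x^2) := by
    intro x
    rw [NNReal.smul_def, smul_eq_mul, Real.coe_toNNReal _ (gaussianPDFReal_nonneg 0 v x),
      gaussianPDFReal]
    rw [mul_assoc, ← Real.exp_add]
    congr 1
    push_cast
    field_simp
    ring
  simp_rw [heq]
  rw [MeasureTheory.integral_const_mul, integral_gaussian]
  have hb : (0:ℝ) < s + (2*v)⁻¹ := by positivity
  have h2pv : (0:ℝ) < 2 * π * v := by positivity
  rw [← Real.sqrt_inv, ← Real.sqrt_mul (by positivity)]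
  rw [one_div, ← Real.sqrt_inv]
  congr 1
  push_cast
  rw [eq_comm, inv_eq_iff_eq_inv, eq_comm]
  field_simp
  ring

lemma pi_gaussian_chernoff {n : ℕ} (v : Fin n → ℝ≥0) (hv : ∀ i, v i ≠ 0)
    (I : Finset (Fin n)) (s : ℝ) (hs : 0 ≤ s) (a : ℝ) [DecidablePred (· ∈ I)] :
    ((Measure.pi fun i => gaussianReal 0 (v i)) {x | ∑ i ∈ I, (x i)^2 ≤ a}).toReal
      ≤ Real.exp (s * a) * ∏ i ∈ I, (1 / Real.sqrt (1 + 2*s*(v i))) := by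
  set ν := Measure.pi fun i => gaussianReal 0 (v i) with hν
  haveI : IsProbabilityMeasure ν := by rw [hν]; infer_instance
  set X : (Fin n → ℝ) → ℝ := fun x => ∑ i ∈ I, (x i)^2 with hX
  have hXm : Measurable X := by
    apply Finset.measurable_sum
    intro i _
    exact (measurable_pi_apply i).pow_const 2
  have hXnn : ∀ x, 0 ≤ X x := fun x => Finset.sum_nonneg fun i _ => sq_nonneg _
  have h_int : Integrable (fun ω => Real.exp (-s * X ω)) ν := by
    refine Integrable.mono' (integrable_const 1) ((hXm.const_mul (-s)).exp).aestronglyMeasurable ?_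
    refine ae_of_all _ fun x => ?_
    rw [Real.norm_eq_abs, abs_of_pos (Real.exp_pos _)]
    rw [show (1:ℝ) = Real.exp 0 by simp]
    apply Real.exp_le_exp.2
    have := hXnn x
    nlinarith
  have hch := measure_le_le_exp_mul_mgf (X := X) (μ := ν) a (t := -s) (by linarith) h_int
  rw [neg_neg] at hch
  refine hch.trans ?_
  apply mul_le_mul_of_nonneg_left _ (Real.exp_pos _).le |>.trans_eq rfl
  -- compute mgf exactly; prove equality then le_of_eq
  have hmgf : mgf X ν (-s) = ∏ i ∈ I, (1 / Real.sqrt (1 + 2*s*(v i))) := by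
    rw [mgf]
    set g : Fin n → ℝ → ℝ := fun i y => if i ∈ I then Real.exp (-(s*y^2)) else 1 with hg
    have hpt : ∀ x : Fin n → ℝ, Real.exp (-s * X x) = ∏ i, g i (x i) := by
      intro x
      rw [hg]
      simp only []
      rw [← Finset.prod_filter]
      simp only [Finset.filter_mem_eq_inter, Finset.univ_inter]
      rw [← Real.exp_sum]
      congr 1
      rw [hX, Finset.mul_sum]
      exact Finset.sum_congr rfl fun i _ => by ring
    rw [integral_congr_ae (ae_of_all _ hpt)]
    have hprod := MeasureTheory.integral_fintype_prod_eq_prod (μ := fun i => gaussianReal 0 (v i)) g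
    have hident : ν = @volume _ (@MeasureSpace.pi (Fin n) _ (fun _ => ℝ)
      (fun i => ⟨gaussianReal 0 (v i)⟩)) := rfl
    rw [hν]
    rw [hprod]
    have : ∀ i, (∫ y : ℝ, g i y ∂(gaussianReal 0 (v i)))
        = if i ∈ I then 1 / Real.sqrt (1 + 2*s*(v i)) else 1 := by
      intro i
      by_cases hi : i ∈ I
      · simp only [hg, hi, if_true]
        exact gaussian_exp_sq_integral (v i) (hv i) s hs
      · simp [hg, hi]
    simp_rw [this]
    rw [← Finset.prod_filter]
    simp only [Finset.filter_mem_eq_inter, Finset.univ_inter]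
  rw [hmgf]

lemma group_bound {n : ℕ} (v : Fin n → ℝ≥0) (hv : ∀ i, v i ≠ 0) (I : Finset (Fin n))
    (τ lam : ℝ) (hτ : 0 < τ) (hlam0 : 0 ≤ lam) (hlam1 : lam < 1)
    (hvτ : ∀ i ∈ I, τ ≤ (v i : ℝ)) [DecidablePred (· ∈ I)] :
    ((Measure.pi fun i => gaussianReal 0 (v i))
        {x | ∑ i ∈ I, (x i)^2 ≤ (1-lam) * I.card * τ}).toReal
      ≤ Real.exp (-(I.card : ℝ) * lam^2 / 4) := by
  set s : ℝ := lam / (2*τ) with hsdef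
  have hs : 0 ≤ s := by positivity
  refine (pi_gaussian_chernoff v hv I s hs _).trans ?_
  set N : ℝ := (I.card : ℝ) with hN
  have hN0 : 0 ≤ N := by positivity
  have h1l : (0:ℝ) < 1 + lam := by linarith
  -- bound each factor
  have hfac : ∀ i ∈ I, 1 / Real.sqrt (1 + 2*s*(v i)) ≤ 1 / Real.sqrt (1+lam) := by
    intro i hi
    have hvi : τ ≤ (v i : ℝ) := hvτ i hi
    have h2sv : lam ≤ 2*s*(v i) := by
      rw [hsdef]
      rw [show 2 * (lam / (2*τ)) * (v i : ℝ) = lam * (v i : ℝ) / τ by field_simp]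
      rw [le_div_iff₀ hτ]
      nlinarith
    gcongr
  have hprodle : (∏ i ∈ I, (1 / Real.sqrt (1 + 2*s*(v i))))
      ≤ (1 / Real.sqrt (1+lam)) ^ I.card := by
    rw [← Finset.prod_const]
    exact Finset.prod_le_prod (fun i _ => by positivity) hfac
  have hsqrt : 1/Real.sqrt (1+lam) = Real.exp (-(Real.log (1+lam)/2)) := by
    rw [one_div, ← Real.log_sqrt h1l.le, Real.exp_neg, Real.exp_log (Real.sqrt_pos.2 h1l)]
  have hpow : (1 / Real.sqrt (1+lam)) ^ I.card = Real.exp (-(N * Real.log (1+lam) / 2)) := by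
    rw [hsqrt, ← Real.exp_nat_mul]
    congr 1
    rw [hN]
    ring
  have hlog := log_ge_sub_sq hlam0
  calc Real.exp (s * ((1-lam) * N * τ)) * ∏ i ∈ I, (1 / Real.sqrt (1 + 2*s*(v i)))
      ≤ Real.exp (s * ((1-lam) * N * τ)) * Real.exp (-(N * Real.log (1+lam) / 2)) := by
        rw [← hpow]
        exact mul_le_mul_of_nonneg_left hprodle (Real.exp_pos _).le
    _ = Real.exp (s * ((1-lam) * N * τ) - N * Real.log (1+lam) / 2) := by
        rw [← Real.exp_add]; ring_nf
    _ ≤ Real.exp (-N * lam^2 / 4) := by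
        apply Real.exp_le_exp.2
        have hsa : s * ((1-lam) * N * τ) = lam * (1-lam) * N / 2 := by
          rw [hsdef]; field_simp
        rw [hsa]
        nlinarith [mul_le_mul_of_nonneg_left hlog hN0]

lemma tauStar_pos {ρΔ ρAdv ρDec : ℝ} (hρΔ : 0 < ρΔ) (hρAdv : 0 < ρAdv) (hρDec : 0 < ρDec)
    (a : ℝ) : 0 < tauStar ρΔ ρAdv ρDec a := by
  unfold tauStar
  have h1 : 0 < a ^ 2 * ρΔ + ρAdv := by positivity
  have h2 : 0 ≤ a ^ 2 * ρΔ * ρAdv / (a ^ 2 * ρΔ + ρAdv) := by positivity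
  linarith

lemma tauStar_mono {ρΔ ρAdv ρDec : ℝ} (hρΔ : 0 < ρΔ) (hρAdv : 0 < ρAdv)
    {a b : ℝ} (ha : 0 ≤ a) (hab : a ≤ b) :
    tauStar ρΔ ρAdv ρDec a ≤ tauStar ρΔ ρAdv ρDec b := by
  unfold tauStar
  have h1 : 0 < a ^ 2 * ρΔ + ρAdv := by positivity
  have h2 : 0 < b ^ 2 * ρΔ + ρAdv := by positivity
  have hsq : a^2 ≤ b^2 := by nlinarith
  apply add_le_add_left
  rw [div_le_div_iff₀ h1 h2]
  nlinarith [mul_nonneg (mul_nonneg hρΔ.le (mul_pos hρAdv hρAdv).le) (sub_nonneg.2 hsq)]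

lemma aux8 {c : ℝ} (hc : 0 ≤ c) : -c/4 ≤ -c/8 := by linarith

open scoped Classical in
/-- For `G_i ~ N(0, τ*(f(i)))` independent, with `f` taking value `k` on at most `γℓ`
coordinates and values `≥ d` elsewhere,
`Pr(Σ G_i² ≤ ℓ(1+δ)(k²ρ_Δ+ρ_Dec)) ≤ exp(−ℓγλ²/8) + exp(−ℓ(1−γ)λ²/8)` where
`λ = max(0, 1 − (1+δ)(k²ρ_Δ+ρ_Dec)/(γτ*(k)+(1−γ)τ*(d)))`. -/
theorem detection_tail_bound (ρΔ ρAdv ρDec δ : ℝ)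
    (hρΔ : 0 < ρΔ) (hρAdv : 0 < ρAdv) (hρDec : 0 < ρDec) (hδ : 0 < δ)
    (γ : ℝ) (hγ1 : 1 / 2 < γ) (hγ2 : γ < 1)
    (ℓ : ℕ) (hℓ : 0 < ℓ) (hint : ∃ m : ℕ, (m : ℝ) = γ * ℓ)
    (k d : ℝ) (hk : 0 ≤ k) (hkd : k < d) (hd : d ≤ 1)
    (f : Fin ℓ → ℝ) (hf01 : ∀ i, 0 ≤ f i ∧ f i ≤ 1)
    (hf : ∀ i, f i = k ∨ d ≤ f i)
    (hcount : ((Finset.univ.filter (fun i => f i = k)).card : ℝ) ≤ γ * ℓ)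
    (lam : ℝ) (hlam : lam = max 0 (1 - (1 + δ) * (k ^ 2 * ρΔ + ρDec) /
      (γ * tauStar ρΔ ρAdv ρDec k + (1 - γ) * tauStar ρΔ ρAdv ρDec d))) :
    ((Measure.pi fun i => gaussianReal 0 (tauStar ρΔ ρAdv ρDec (f i)).toNNReal)
        {x | ∑ i, (x i) ^ 2 ≤ (ℓ : ℝ) * (1 + δ) * (k ^ 2 * ρΔ + ρDec)}).toReal
      ≤ Real.exp (-(ℓ : ℝ) * γ * lam ^ 2 / 8)
        + Real.exp (-(ℓ : ℝ) * (1 - γ) * lam ^ 2 / 8) := by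
  set v : Fin ℓ → ℝ≥0 := fun i => (tauStar ρΔ ρAdv ρDec (f i)).toNNReal with hvdef
  set ν := Measure.pi fun i => gaussianReal 0 (v i) with hν
  haveI : IsProbabilityMeasure ν := by rw [hν]; infer_instance
  have hτpos : ∀ a : ℝ, 0 < tauStar ρΔ ρAdv ρDec a := tauStar_pos hρΔ hρAdv hρDec
  have hv : ∀ i, v i ≠ 0 := by
    intro i
    simp only [hvdef, ne_eq, Real.toNNReal_eq_zero, not_le]
    exact hτpos (f i)
  have hvcoe : ∀ i, (v i : ℝ) = tauStar ρΔ ρAdv ρDec (f i) := fun i =>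
    Real.coe_toNNReal _ (hτpos (f i)).le
  set τk := tauStar ρΔ ρAdv ρDec k with hτk
  set τd := tauStar ρΔ ρAdv ρDec d with hτd
  have hτkpos : 0 < τk := hτpos k
  have hτdpos : 0 < τd := hτpos d
  have hγ0 : 0 < γ := by linarith
  have hγ1' : 0 < 1 - γ := by linarith
  set D := γ * τk + (1 - γ) * τd with hD
  have hDpos : 0 < D := by positivity
  set A' := (1 + δ) * (k ^ 2 * ρΔ + ρDec) with hA'
  have hA'pos : 0 < A' := by positivity
  have hle1 : (ν {x | ∑ i, (x i) ^ 2 ≤ (ℓ : ℝ) * (1 + δ) * (k ^ 2 * ρΔ + ρDec)}).toReal ≤ 1 := by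
    rw [← ENNReal.toReal_one]
    exact ENNReal.toReal_mono ENNReal.one_ne_top prob_le_one
  rcases le_or_gt (1 - A' / D) 0 with hcase | hcase
  · -- trivial case lam = 0
    have hlam0 : lam = 0 := by rw [hlam]; exact max_eq_left hcase
    rw [hlam0]
    norm_num
    linarith
  · -- main case
    have hlameq : lam = 1 - A' / D := by rw [hlam]; exact max_eq_right hcase.le
    have hlampos : 0 < lam := by rw [hlameq]; exact hcase
    have hlamlt : lam < 1 := by
      rw [hlameq]
      have : 0 < A' / D := div_pos hA'pos hDpos
      linarith
    have h1lam : (1 - lam) * D = A' := by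
      rw [hlameq]
      field_simp
      ring
    obtain ⟨m, hm⟩ := hint
    have hmℓ : m ≤ ℓ := by
      have : (m : ℝ) ≤ (ℓ : ℝ) := by rw [hm]; nlinarith
      exact_mod_cast this
    set S := Finset.univ.filter (fun i => f i = k) with hS
    have hScard : S.card ≤ m := by
      have : (S.card : ℝ) ≤ (m : ℝ) := by rw [hm]; exact hcount
      exact_mod_cast this
    obtain ⟨S', hSS', hS'univ, hS'card⟩ := Finset.exists_subsuperset_card_eq
      (Finset.subset_univ S) hScard (by simpa using hmℓ)
    set T' := S'ᶜ with hT'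
    have hT'card : T'.card = ℓ - m := by
      rw [hT', Finset.card_compl, hS'card]
      simp
    have hT'cardR : (T'.card : ℝ) = (1 - γ) * ℓ := by
      rw [hT'card, Nat.cast_sub hmℓ, hm]
      ring
    have hS'cardR : (S'.card : ℝ) = γ * ℓ := by rw [hS'card, hm]
    -- variance lower bounds
    have hvS : ∀ i ∈ S', τk ≤ (v i : ℝ) := by
      intro i _
      rw [hvcoe]
      apply tauStar_mono hρΔ hρAdv hk
      rcases hf i with h | h
      · rw [h]
      · linarith
    have hvT : ∀ i ∈ T', τd ≤ (v i : ℝ) := by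
      intro i hi
      rw [hvcoe]
      apply tauStar_mono hρΔ hρAdv (by linarith)
      rcases hf i with h | h
      · exfalso
        rw [hT', Finset.mem_compl] at hi
        exact hi (hSS' (by simp [hS, h]))
      · exact h
    -- event inclusion
    set ES := {x : Fin ℓ → ℝ | ∑ i ∈ S', (x i)^2 ≤ (1-lam) * S'.card * τk} with hES
    set ET := {x : Fin ℓ → ℝ | ∑ i ∈ T', (x i)^2 ≤ (1-lam) * T'.card * τd} with hET
    have hincl : {x : Fin ℓ → ℝ | ∑ i, (x i) ^ 2 ≤ (ℓ : ℝ) * (1 + δ) * (k ^ 2 * ρΔ + ρDec)}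
        ⊆ ES ∪ ET := by
      intro x hx
      simp only [Set.mem_setOf_eq] at hx
      by_contra hmem
      simp only [Set.mem_union, hES, hET, Set.mem_setOf_eq, not_or, not_le] at hmem
      obtain ⟨h1, h2⟩ := hmem
      have hsplit : ∑ i ∈ S', (x i)^2 + ∑ i ∈ T', (x i)^2 = ∑ i, (x i)^2 := by
        rw [hT']
        exact Finset.sum_add_sum_compl S' _
      have hAeq : (1-lam) * S'.card * τk + (1-lam) * T'.card * τd
          = (ℓ : ℝ) * (1 + δ) * (k ^ 2 * ρΔ + ρDec) := by
        rw [hS'cardR, hT'cardR]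
        have : (ℓ : ℝ) * (1 + δ) * (k ^ 2 * ρΔ + ρDec) = (ℓ:ℝ) * A' := by rw [hA']; ring
        rw [this, ← h1lam, hD]
        ring
      have h3 := add_lt_add h1 h2
      rw [hsplit, hAeq] at h3
      exact absurd hx (not_le.2 h3)
    have hsum : (ν {x | ∑ i, (x i) ^ 2 ≤ (ℓ : ℝ) * (1 + δ) * (k ^ 2 * ρΔ + ρDec)}).toReal
        ≤ (ν ES).toReal + (ν ET).toReal := by
      have h1 : ν {x | ∑ i, (x i) ^ 2 ≤ (ℓ : ℝ) * (1 + δ) * (k ^ 2 * ρΔ + ρDec)}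
          ≤ ν ES + ν ET := (measure_mono hincl).trans (measure_union_le _ _)
      have h2 := ENNReal.toReal_mono
        (by exact ENNReal.add_ne_top.2 ⟨measure_ne_top _ _, measure_ne_top _ _⟩) h1
      rwa [ENNReal.toReal_add (measure_ne_top _ _) (measure_ne_top _ _)] at h2
    have hbS : (ν ES).toReal ≤ Real.exp (-(ℓ : ℝ) * γ * lam ^ 2 / 8) := by
      refine (group_bound v hv S' τk lam hτkpos hlampos.le hlamlt hvS).trans ?_
      apply Real.exp_le_exp.2
      rw [hS'cardR, show -(γ * (ℓ:ℝ)) * lam ^ 2 / 4 = -(γ*ℓ*lam^2)/4 from by ring,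
        show -(ℓ:ℝ) * γ * lam ^ 2 / 8 = -(γ*ℓ*lam^2)/8 from by ring]
      exact aux8 (by positivity)
    have hbT : (ν ET).toReal ≤ Real.exp (-(ℓ : ℝ) * (1 - γ) * lam ^ 2 / 8) := by
      refine (group_bound v hv T' τd lam hτdpos hlampos.le hlamlt hvT).trans ?_
      apply Real.exp_le_exp.2
      rw [hT'cardR, show -((1-γ) * (ℓ:ℝ)) * lam ^ 2 / 4 = -((1-γ)*ℓ*lam^2)/4 from by ring,
        show -(ℓ:ℝ) * (1-γ) * lam ^ 2 / 8 = -((1-γ)*ℓ*lam^2)/8 from by ring]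
      exact aux8 (by positivity)
    exact hsum.trans (add_le_add hbS hbT)
end

section
/- Let A be a finite nonempty set, let β be a positive integer with β < |A|, let p : A → [0,1], and let μ = (1/|A|)·Σ_{a∈A} p(a) with μ > 0. Let B be a uniformly random β-element subset of A. Then for every real c with 1 < c < 1/μ, Pr( Σ_{a∈B} p(a) ≥ c·β·μ ) ≤ exp( −β·D₂(c·μ ‖ μ) ) ≤ exp( −2·β·((c−1)·μ)² ). -/
open Real Finset

/-- Binary KL divergence `D₂(a‖b)` (natural log). -/
noncomputable def D2 (a b : ℝ) : ℝ :=
  a * Real.log (a / b) + (1 - a) * Real.log ((1 - a) / (1 - b))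



lemma reindex1 {α : Type*} [DecidableEq α] (A : Finset α) (k : ℕ) (F : α → Finset α → ℝ) :
    ∑ S ∈ A.powersetCard (k+1), ∑ a ∈ S, F a (S.erase a)
      = ∑ T ∈ A.powersetCard k, ∑ b ∈ A \ T, F b T := by
  rw [Finset.sum_sigma', Finset.sum_sigma']
  refine Finset.sum_bij' (fun q _ => ⟨q.1.erase q.2, q.2⟩) (fun q _ => ⟨insert q.2 q.1, q.2⟩)
    ?_ ?_ ?_ ?_ ?_
  · rintro ⟨S, a⟩ h
    simp only [Finset.mem_sigma, Finset.mem_powersetCard] at h ⊢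
    obtain ⟨⟨hS, hcard⟩, ha⟩ := h
    refine ⟨⟨(Finset.erase_subset _ _).trans hS, ?_⟩, ?_⟩
    · rw [Finset.card_erase_of_mem ha, hcard]; rfl
    · simp [Finset.mem_sdiff, hS ha]
  · rintro ⟨T, b⟩ h
    simp only [Finset.mem_sigma, Finset.mem_powersetCard, Finset.mem_sdiff] at h ⊢
    obtain ⟨⟨hT, hcard⟩, hbA, hbT⟩ := h
    refine ⟨⟨Finset.insert_subset hbA hT, ?_⟩, Finset.mem_insert_self _ _⟩
    rw [Finset.card_insert_of_notMem hbT, hcard]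
  · rintro ⟨S, a⟩ h
    simp only [Finset.mem_sigma] at h
    simp [Finset.insert_erase h.2]
  · rintro ⟨T, b⟩ h
    simp only [Finset.mem_sigma, Finset.mem_sdiff] at h
    simp [Finset.erase_insert h.2.2]
  · rintro ⟨S, a⟩ h; rfl

lemma swap3 {α : Type*} [DecidableEq α] (A : Finset α) (k : ℕ) (G : α → α → Finset α → ℝ) :
    ∑ T ∈ A.powersetCard k, ∑ a ∈ T, ∑ b ∈ A \ T, G a b (T.erase a)
      = ∑ T ∈ A.powersetCard k, ∑ a ∈ T, ∑ b ∈ A \ T, G b a (T.erase a) := by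
  rw [Finset.sum_sigma', Finset.sum_sigma', Finset.sum_sigma', Finset.sum_sigma']
  have hmap : ∀ q : (Σ _q : (Σ _T : Finset α, α), α),
      q ∈ ((A.powersetCard k).sigma (fun T => T)).sigma (fun q => A \ q.1) →
      (⟨⟨insert q.2 (q.1.1.erase q.1.2), q.2⟩, q.1.2⟩ : (Σ _q : (Σ _T : Finset α, α), α))
        ∈ ((A.powersetCard k).sigma (fun T => T)).sigma (fun q => A \ q.1) := by
    rintro ⟨⟨T, a⟩, b⟩ h
    simp only [Finset.mem_sigma, Finset.mem_powersetCard, Finset.mem_sdiff] at h ⊢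
    obtain ⟨⟨⟨hT, hcard⟩, haT⟩, hbA, hbT⟩ := h
    have hab : a ≠ b := fun e => hbT (e ▸ haT)
    have hbe : b ∉ T.erase a := fun hb => hbT (Finset.mem_of_mem_erase hb)
    refine ⟨⟨⟨Finset.insert_subset hbA ((Finset.erase_subset _ _).trans hT), ?_⟩,
      Finset.mem_insert_self _ _⟩, hT haT, ?_⟩
    · rw [Finset.card_insert_of_notMem hbe, Finset.card_erase_of_mem haT, hcard]
      have hk : 1 ≤ k := hcard ▸ Finset.card_pos.mpr ⟨a, haT⟩
      omega
    · simp only [Finset.mem_insert, not_or]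
      exact ⟨hab, Finset.notMem_erase a T⟩
  refine Finset.sum_bij' (fun q _ => ⟨⟨insert q.2 (q.1.1.erase q.1.2), q.2⟩, q.1.2⟩)
    (fun q _ => ⟨⟨insert q.2 (q.1.1.erase q.1.2), q.2⟩, q.1.2⟩) hmap hmap ?_ ?_ ?_
  · rintro ⟨⟨T, a⟩, b⟩ h
    simp only [Finset.mem_sigma, Finset.mem_powersetCard, Finset.mem_sdiff] at h
    obtain ⟨⟨⟨hT, hcard⟩, haT⟩, hbA, hbT⟩ := h
    have hab : a ≠ b := fun e => hbT (e ▸ haT)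
    have : (insert b (T.erase a)).erase b = T.erase a := Finset.erase_insert
      (fun hb => hbT (Finset.mem_of_mem_erase hb))
    simp only [this]
    have : insert a (T.erase a) = T := Finset.insert_erase haT
    simp [this]
  · rintro ⟨⟨T, a⟩, b⟩ h
    simp only [Finset.mem_sigma, Finset.mem_powersetCard, Finset.mem_sdiff] at h
    obtain ⟨⟨⟨hT, hcard⟩, haT⟩, hbA, hbT⟩ := h
    have hab : a ≠ b := fun e => hbT (e ▸ haT)
    have : (insert b (T.erase a)).erase b = T.erase a := Finset.erase_insert
      (fun hb => hbT (Finset.mem_of_mem_erase hb))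
    simp only [this]
    have : insert a (T.erase a) = T := Finset.insert_erase haT
    simp [this]
  · rintro ⟨⟨T, a⟩, b⟩ h
    simp only [Finset.mem_sigma, Finset.mem_powersetCard, Finset.mem_sdiff] at h
    obtain ⟨⟨⟨hT, hcard⟩, haT⟩, hbA, hbT⟩ := h
    have : (insert b (T.erase a)).erase b = T.erase a := Finset.erase_insert
      (fun hb => hbT (Finset.mem_of_mem_erase hb))
    simp [this]

lemma newton_step {α : Type*} [DecidableEq α] (A : Finset α) (x : α → ℝ)
    (hx : ∀ a ∈ A, 0 ≤ x a) (k : ℕ) (hk : k + 1 ≤ A.card) :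
    (A.card : ℝ) * (k+1) * ∑ S ∈ A.powersetCard (k+1), ∏ a ∈ S, x a
      ≤ ((A.card : ℝ) - k) * (∑ a ∈ A, x a) * ∑ T ∈ A.powersetCard k, ∏ a ∈ T, x a := by
  have hprodnn : ∀ T : Finset α, T ⊆ A → (0:ℝ) ≤ ∏ c ∈ T, x c :=
    fun T hT => Finset.prod_nonneg (fun c hc => hx c (hT hc))
  set n := A.card with hn
  -- W = (k+1) * e_{k+1}
  have h1 : ((k:ℝ)+1) * ∑ S ∈ A.powersetCard (k+1), ∏ a ∈ S, x a
      = ∑ T ∈ A.powersetCard k, ∑ b ∈ A \ T, x b * ∏ c ∈ T, x c := by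
    rw [← reindex1 A k (fun a T => x a * ∏ c ∈ T, x c)]
    rw [Finset.mul_sum]
    refine Finset.sum_congr rfl (fun S hS => ?_)
    rw [Finset.mem_powersetCard] at hS
    calc ((k:ℝ)+1) * ∏ a ∈ S, x a = ∑ _a ∈ S, ∏ a ∈ S, x a := by
          rw [Finset.sum_const, hS.2]; push_cast; ring
      _ = ∑ a ∈ S, x a * ∏ c ∈ S.erase a, x c :=
          Finset.sum_congr rfl (fun a ha => (Finset.mul_prod_erase S x ha).symm)
  -- key inequality
  have h2 : (k:ℝ) * ∑ T ∈ A.powersetCard k, ∑ b ∈ A \ T, x b * ∏ c ∈ T, x c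
      ≤ ((n:ℝ) - k) * ∑ T ∈ A.powersetCard k, (∑ a ∈ T, x a) * ∏ c ∈ T, x c := by
    have lhs_eq : (k:ℝ) * ∑ T ∈ A.powersetCard k, ∑ b ∈ A \ T, x b * ∏ c ∈ T, x c
        = ∑ T ∈ A.powersetCard k, ∑ a ∈ T, ∑ b ∈ A \ T,
            x a * x b * ∏ c ∈ T.erase a, x c := by
      rw [Finset.mul_sum]
      refine Finset.sum_congr rfl (fun T hT => ?_)
      rw [Finset.mem_powersetCard] at hT
      rw [Finset.sum_comm]
      rw [Finset.mul_sum]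
      refine Finset.sum_congr rfl (fun b hb => ?_)
      calc (k:ℝ) * (x b * ∏ c ∈ T, x c)
          = (∑ a ∈ T, x a * ∏ c ∈ T.erase a, x c) * x b := by
            rw [show (∑ a ∈ T, x a * ∏ c ∈ T.erase a, x c) = ∑ _a ∈ T, ∏ c ∈ T, x c from
              Finset.sum_congr rfl (fun a ha => Finset.mul_prod_erase T x ha),
              Finset.sum_const, hT.2]
            push_cast; ring
        _ = ∑ a ∈ T, x a * x b * ∏ c ∈ T.erase a, x c := by
            rw [Finset.sum_mul]; exact Finset.sum_congr rfl (fun a ha => by ring)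
    rw [lhs_eq]
    have rhs_eq : ((n:ℝ) - k) * ∑ T ∈ A.powersetCard k, (∑ a ∈ T, x a) * ∏ c ∈ T, x c
        = ∑ T ∈ A.powersetCard k, ∑ a ∈ T, ∑ b ∈ A \ T,
            x a ^ 2 * ∏ c ∈ T.erase a, x c := by
      rw [Finset.mul_sum]
      refine Finset.sum_congr rfl (fun T hT => ?_)
      rw [Finset.mem_powersetCard] at hT
      have hcardsd : ((A \ T).card : ℝ) = (n:ℝ) - k := by
        rw [Finset.card_sdiff_of_subset hT.1, hT.2, ← hn]
        have : k ≤ n := le_trans (Nat.le_succ k) hk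
        push_cast [Nat.cast_sub this]; ring
      calc ((n:ℝ) - k) * ((∑ a ∈ T, x a) * ∏ c ∈ T, x c)
          = ∑ a ∈ T, ((n:ℝ) - k) * (x a * ∏ c ∈ T, x c) := by
            rw [← Finset.mul_sum, ← Finset.sum_mul]
        _ = ∑ a ∈ T, ∑ b ∈ A \ T, x a ^ 2 * ∏ c ∈ T.erase a, x c := by
            refine Finset.sum_congr rfl (fun a ha => ?_)
            rw [Finset.sum_const, nsmul_eq_mul, hcardsd, ← Finset.mul_prod_erase T x ha]
            ring
    rw [rhs_eq]
    have amgm : ∀ T ∈ A.powersetCard k, ∀ a ∈ T, ∀ b ∈ A \ T,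
        x a * x b * ∏ c ∈ T.erase a, x c
          ≤ (x a ^ 2 * ∏ c ∈ T.erase a, x c + x b ^ 2 * ∏ c ∈ T.erase a, x c) / 2 := by
      intro T hT a ha b hb
      rw [Finset.mem_powersetCard] at hT
      have hP : (0:ℝ) ≤ ∏ c ∈ T.erase a, x c :=
        hprodnn _ ((Finset.erase_subset _ _).trans hT.1)
      have : x a * x b ≤ (x a ^ 2 + x b ^ 2) / 2 := by nlinarith [sq_nonneg (x a - x b)]
      nlinarith
    calc ∑ T ∈ A.powersetCard k, ∑ a ∈ T, ∑ b ∈ A \ T, x a * x b * ∏ c ∈ T.erase a, x c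
        ≤ ∑ T ∈ A.powersetCard k, ∑ a ∈ T, ∑ b ∈ A \ T,
            (x a ^ 2 * ∏ c ∈ T.erase a, x c + x b ^ 2 * ∏ c ∈ T.erase a, x c) / 2 := by
          refine Finset.sum_le_sum (fun T hT => Finset.sum_le_sum (fun a ha =>
            Finset.sum_le_sum (fun b hb => amgm T hT a ha b hb)))
      _ = ∑ T ∈ A.powersetCard k, ∑ a ∈ T, ∑ b ∈ A \ T, x a ^ 2 * ∏ c ∈ T.erase a, x c := by
          have hsw := swap3 A k (fun u v U => x u ^ 2 * ∏ c ∈ U, x c)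
          have expand : ∑ T ∈ A.powersetCard k, ∑ a ∈ T, ∑ b ∈ A \ T,
              (x a ^ 2 * ∏ c ∈ T.erase a, x c + x b ^ 2 * ∏ c ∈ T.erase a, x c) / 2
            = (∑ T ∈ A.powersetCard k, ∑ a ∈ T, ∑ b ∈ A \ T,
                x a ^ 2 * ∏ c ∈ T.erase a, x c) / 2
              + (∑ T ∈ A.powersetCard k, ∑ a ∈ T, ∑ b ∈ A \ T,
                x b ^ 2 * ∏ c ∈ T.erase a, x c) / 2 := by
            simp only [add_div, Finset.sum_add_distrib, Finset.sum_div]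
          rw [expand, ← hsw]; ring
  -- assemble
  have h3 : ∀ T ∈ A.powersetCard k,
      (∑ b ∈ A \ T, x b * ∏ c ∈ T, x c) + (∑ a ∈ T, x a) * ∏ c ∈ T, x c
        = (∑ a ∈ A, x a) * ∏ c ∈ T, x c := by
    intro T hT
    rw [Finset.mem_powersetCard] at hT
    rw [← Finset.sum_mul, ← add_mul, Finset.sum_sdiff hT.1]
  have h4 : ∑ T ∈ A.powersetCard k, (∑ b ∈ A \ T, x b * ∏ c ∈ T, x c)
        + ∑ T ∈ A.powersetCard k, (∑ a ∈ T, x a) * ∏ c ∈ T, x c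
      = (∑ a ∈ A, x a) * ∑ T ∈ A.powersetCard k, ∏ c ∈ T, x c := by
    rw [← Finset.sum_add_distrib, Finset.mul_sum]
    exact Finset.sum_congr rfl h3
  have hWnn : 0 ≤ ∑ T ∈ A.powersetCard k, ∑ b ∈ A \ T, x b * ∏ c ∈ T, x c := by
    refine Finset.sum_nonneg (fun T hT => Finset.sum_nonneg (fun b hb => ?_))
    rw [Finset.mem_powersetCard] at hT
    rw [Finset.mem_sdiff] at hb
    exact mul_nonneg (hx b hb.1) (hprodnn T hT.1)
  have hk' : (k:ℝ) + 1 ≤ (n:ℝ) := by exact_mod_cast hk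
  nlinarith [h1, h2, h4, hWnn]

lemma maclaurin_aux {α : Type*} [DecidableEq α] (A : Finset α) (x : α → ℝ)
    (hx : ∀ a ∈ A, 0 ≤ x a) :
    ∀ k, k ≤ A.card → ∑ S ∈ A.powersetCard k, ∏ a ∈ S, x a
      ≤ (A.card.choose k : ℝ) * ((∑ a ∈ A, x a) / A.card) ^ k := by
  intro k
  induction k with
  | zero => intro _; simp
  | succ k ih =>
    intro hk
    set n := A.card with hn
    have hkn : k ≤ n := Nat.le_of_succ_le hk
    have hn0 : 0 < (n:ℝ) := by
      have : 0 < n := lt_of_lt_of_le (Nat.succ_pos k) hk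
      exact_mod_cast this
    have hSx : 0 ≤ ∑ a ∈ A, x a := Finset.sum_nonneg hx
    have hnk : (0:ℝ) ≤ (n:ℝ) - k := by
      have : (k:ℝ) ≤ (n:ℝ) := by exact_mod_cast hkn
      linarith
    have h := newton_step A x hx k hk
    have ih' := ih hkn
    have hch : (n.choose (k+1) : ℝ) * ((k:ℝ)+1) = (n.choose k : ℝ) * ((n:ℝ) - (k:ℝ)) := by
      have h6 := Nat.choose_succ_right_eq n k
      have : ((n.choose (k+1) * (k+1) : ℕ) : ℝ) = ((n.choose k * (n - k) : ℕ) : ℝ) := by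
        exact_mod_cast congrArg (Nat.cast (R := ℝ)) h6
      push_cast [Nat.cast_sub hkn] at this
      linarith
    have hnS : (n:ℝ) * ((∑ a ∈ A, x a) / (n:ℝ)) = ∑ a ∈ A, x a := by field_simp
    have key : (n:ℝ) * ((k:ℝ)+1) * ∑ S ∈ A.powersetCard (k+1), ∏ a ∈ S, x a
        ≤ (n:ℝ) * ((k:ℝ)+1) *
          ((n.choose (k+1) : ℝ) * ((∑ a ∈ A, x a) / (n:ℝ)) ^ (k+1)) := by
      calc (n:ℝ) * ((k:ℝ)+1) * ∑ S ∈ A.powersetCard (k+1), ∏ a ∈ S, x a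
          ≤ ((n:ℝ) - k) * (∑ a ∈ A, x a) * ∑ T ∈ A.powersetCard k, ∏ a ∈ T, x a := by
            exact_mod_cast h
        _ ≤ ((n:ℝ) - k) * (∑ a ∈ A, x a) *
              ((n.choose k : ℝ) * ((∑ a ∈ A, x a) / (n:ℝ)) ^ k) := by
            exact mul_le_mul_of_nonneg_left ih' (mul_nonneg hnk hSx)
        _ = (n:ℝ) * ((k:ℝ)+1) *
              ((n.choose (k+1) : ℝ) * ((∑ a ∈ A, x a) / (n:ℝ)) ^ (k+1)) := by
            rw [pow_succ, show (n:ℝ) * ((k:ℝ)+1) *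
                ((n.choose (k+1) : ℝ) * (((∑ a ∈ A, x a) / (n:ℝ)) ^ k * ((∑ a ∈ A, x a) / (n:ℝ))))
              = ((n.choose (k+1) : ℝ) * ((k:ℝ)+1)) * ((n:ℝ) * ((∑ a ∈ A, x a) / (n:ℝ)))
                * ((∑ a ∈ A, x a) / (n:ℝ)) ^ k from by ring, hch, hnS]
            ring
    have hpos : 0 < (n:ℝ) * ((k:ℝ)+1) := by positivity
    have := (mul_le_mul_iff_right₀ hpos).mp key
    push_cast
    exact_mod_cast this

lemma pinsker_aux {a b : ℝ} (hb : 0 < b) (hba : b < a) (ha : a < 1) :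
    2 * (a - b) ^ 2 ≤ a * Real.log (a / b) + (1 - a) * Real.log ((1 - a) / (1 - b)) := by
  have hb1 : b < 1 := hba.trans ha
  have ha0 : 0 < a := hb.trans hba
  set f : ℝ → ℝ := fun x => x * Real.log x - x * Real.log b
    + (1 - x) * Real.log (1 - x) - (1 - x) * Real.log (1 - b) - 2 * (x - b) ^ 2 with hf
  set g : ℝ → ℝ := fun x => Real.log x - Real.log b - Real.log (1 - x)
    + Real.log (1 - b) - 4 * (x - b) with hg
  have hfd : ∀ x ∈ Set.Ioo (0:ℝ) 1, HasDerivAt f (g x) x := by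
    rintro x ⟨hx0, hx1⟩
    have hxne : x ≠ 0 := ne_of_gt hx0
    have h1x : (0:ℝ) < 1 - x := by linarith
    have h1xne : 1 - x ≠ 0 := ne_of_gt h1x
    have hu : HasDerivAt (fun y : ℝ => 1 - y) (-1) x := by
      simpa using (hasDerivAt_id x).const_sub 1
    have h₁ : HasDerivAt (fun y : ℝ => y * Real.log y) (Real.log x + 1) x :=
      Real.hasDerivAt_mul_log hxne
    have h₂ : HasDerivAt (fun y : ℝ => y * Real.log b) (Real.log b) x := by
      simpa using (hasDerivAt_id x).mul_const (Real.log b)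
    have h₃ : HasDerivAt (fun y : ℝ => (1 - y) * Real.log (1 - y))
        ((Real.log (1 - x) + 1) * (-1)) x :=
      (Real.hasDerivAt_mul_log h1xne).comp x hu
    have h₄ : HasDerivAt (fun y : ℝ => (1 - y) * Real.log (1 - b)) ((-1) * Real.log (1 - b)) x :=
      hu.mul_const (Real.log (1 - b))
    have h₅ : HasDerivAt (fun y : ℝ => 2 * (y - b) ^ 2) (2 * (2 * (x - b) ^ 1 * 1)) x :=
      (((hasDerivAt_id x).sub_const b).pow 2).const_mul 2
    have H := (((h₁.sub h₂).add h₃).sub h₄).sub h₅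
    have : Real.log x + 1 - Real.log b + (Real.log (1 - x) + 1) * (-1)
        - (-1) * Real.log (1 - b) - 2 * (2 * (x - b) ^ 1 * 1) = g x := by
      simp only [hg]; ring
    rw [this] at H
    exact H
  have hgd : ∀ x ∈ Set.Ioo (0:ℝ) 1, HasDerivAt g (x⁻¹ + (1 - x)⁻¹ - 4) x := by
    rintro x ⟨hx0, hx1⟩
    have hxne : x ≠ 0 := ne_of_gt hx0
    have h1x : (0:ℝ) < 1 - x := by linarith
    have h1xne : 1 - x ≠ 0 := ne_of_gt h1x
    have hu : HasDerivAt (fun y : ℝ => 1 - y) (-1) x := by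
      simpa using (hasDerivAt_id x).const_sub 1
    have h₁ : HasDerivAt Real.log x⁻¹ x := Real.hasDerivAt_log hxne
    have h₃ : HasDerivAt (fun y : ℝ => Real.log (1 - y)) ((1 - x)⁻¹ * (-1)) x :=
      (Real.hasDerivAt_log h1xne).comp x hu
    have h₅ : HasDerivAt (fun y : ℝ => 4 * (y - b)) (4 * 1) x :=
      ((hasDerivAt_id x).sub_const b).const_mul 4
    have H := (((h₁.sub_const (Real.log b)).sub h₃).add_const (Real.log (1 - b))).sub h₅
    have : x⁻¹ - (1 - x)⁻¹ * (-1) - 4 * 1 = x⁻¹ + (1 - x)⁻¹ - 4 := by ring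
    rw [this] at H
    exact H
  have hsub : Set.Icc b a ⊆ Set.Ioo (0:ℝ) 1 :=
    fun x hx => ⟨lt_of_lt_of_le hb hx.1, lt_of_le_of_lt hx.2 ha⟩
  have hsubi : Set.Ioo b a ⊆ Set.Ioo (0:ℝ) 1 := fun x hx => hsub ⟨le_of_lt hx.1, le_of_lt hx.2⟩
  have hIcc : interior (Set.Icc b a) = Set.Ioo b a := interior_Icc
  -- g is monotone on [b, a]
  have hgderivpos : ∀ x ∈ Set.Ioo (0:ℝ) 1, 0 ≤ x⁻¹ + (1 - x)⁻¹ - 4 := by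
    rintro x ⟨hx0, hx1⟩
    have h1x : (0:ℝ) < 1 - x := by linarith
    have key : x⁻¹ + (1 - x)⁻¹ - 4 = (1 - 4 * (x * (1 - x))) / (x * (1 - x)) := by
      field_simp; ring
    rw [key]
    apply div_nonneg _ (by positivity)
    nlinarith [sq_nonneg (2 * x - 1)]
  have gmono : MonotoneOn g (Set.Icc b a) := by
    refine monotoneOn_of_deriv_nonneg (convex_Icc b a)
      (fun x hx => ((hgd x (hsub hx)).continuousAt).continuousWithinAt)
      (fun x hx => ((hgd x (hsubi (hIcc ▸ hx))).differentiableAt).differentiableWithinAt)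
      (fun x hx => ?_)
    rw [hIcc] at hx
    rw [(hgd x (hsubi hx)).deriv]
    exact hgderivpos x (hsubi hx)
  have hgb : g b = 0 := by simp only [hg]; ring
  have hgnn : ∀ x ∈ Set.Icc b a, 0 ≤ g x := by
    intro x hx
    have := gmono (Set.left_mem_Icc.mpr (le_of_lt hba)) hx hx.1
    rw [hgb] at this; exact this
  have fmono : MonotoneOn f (Set.Icc b a) := by
    refine monotoneOn_of_deriv_nonneg (convex_Icc b a)
      (fun x hx => ((hfd x (hsub hx)).continuousAt).continuousWithinAt)
      (fun x hx => ((hfd x (hsubi (hIcc ▸ hx))).differentiableAt).differentiableWithinAt)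
      (fun x hx => ?_)
    rw [hIcc] at hx
    rw [(hfd x (hsubi hx)).deriv]
    exact hgnn x ⟨le_of_lt hx.1, le_of_lt hx.2⟩
  have hfb : f b = 0 := by simp only [hf]; ring
  have hfa : 0 ≤ f a := by
    have := fmono (Set.left_mem_Icc.mpr (le_of_lt hba)) (Set.right_mem_Icc.mpr (le_of_lt hba))
      (le_of_lt hba)
    rw [hfb] at this; exact this
  rw [Real.log_div (ne_of_gt ha0) (ne_of_gt hb),
    Real.log_div (by linarith : (1:ℝ) - a ≠ 0) (by linarith : (1:ℝ) - b ≠ 0)]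
  simp only [hf] at hfa
  linarith [hfa]

open scoped Classical in
/-- Hoeffding's bound for sampling without replacement: for `B` a uniformly random
`β`-element subset of `A`, `p : A → [0,1]` with mean `μ > 0`, and `1 < c < 1/μ`,
`Pr(Σ_{a∈B} p(a) ≥ cβμ) ≤ exp(−β·D₂(cμ‖μ)) ≤ exp(−2β((c−1)μ)²)`. -/
theorem hoeffding_without_replacement {α : Type*} (A : Finset α) (hA : A.Nonempty)
    (β : ℕ) (hβ : 0 < β) (hβA : β < A.card)
    (p : α → ℝ) (hp : ∀ a ∈ A, 0 ≤ p a ∧ p a ≤ 1)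
    (μ : ℝ) (hμdef : μ = (∑ a ∈ A, p a) / A.card) (hμ : 0 < μ)
    (c : ℝ) (hc1 : 1 < c) (hc2 : c < 1 / μ) :
    ((((A.powersetCard β).filter (fun S => c * β * μ ≤ ∑ a ∈ S, p a)).card : ℝ)
        / ((A.powersetCard β).card : ℝ)
      ≤ Real.exp (-(β : ℝ) * D2 (c * μ) μ)) ∧
    Real.exp (-(β : ℝ) * D2 (c * μ) μ) ≤ Real.exp (-2 * (β : ℝ) * ((c - 1) * μ) ^ 2) := by
  classical
  set n := A.card with hn
  have hn0 : 0 < n := Finset.card_pos.mpr hA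
  have hnR : (0:ℝ) < (n:ℝ) := by exact_mod_cast hn0
  -- basic facts about μ, c
  have ha1 : c * μ < 1 := (lt_div_iff₀ hμ).mp hc2
  have hba : μ < c * μ := (lt_mul_iff_one_lt_left hμ).mpr hc1
  have hb1 : μ < 1 := hba.trans ha1
  have ha0 : 0 < c * μ := hμ.trans hba
  have h1a : 0 < 1 - c * μ := by linarith
  have h1b : 0 < 1 - μ := by linarith
  have hSp : ∑ a ∈ A, p a = μ * n := by
    rw [hμdef]; field_simp
  -- the exponential tilt parameter
  set R : ℝ := c * μ * (1 - μ) / (μ * (1 - c * μ)) with hR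
  have hRpos : 0 < R := by positivity
  have hR1 : 1 < R := by
    rw [hR, lt_div_iff₀ (by positivity)]
    nlinarith
  set t : ℝ := Real.log R with htdef
  have ht0 : 0 < t := Real.log_pos hR1
  have hexpt : Real.exp t = R := Real.exp_log hRpos
  -- expansion of t into logs
  have htexp : t = Real.log (c * μ) + Real.log (1 - μ) - Real.log μ - Real.log (1 - c * μ) := by
    rw [htdef, hR, Real.log_div (by positivity) (by positivity),
      Real.log_mul (ne_of_gt ha0) (ne_of_gt h1b), Real.log_mul (ne_of_gt hμ) (ne_of_gt h1a)]
    ring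
  -- Pinsker / second inequality
  have hD2exp : D2 (c * μ) μ
      = c * μ * (Real.log (c * μ) - Real.log μ)
        + (1 - c * μ) * (Real.log (1 - c * μ) - Real.log (1 - μ)) := by
    rw [D2, Real.log_div (by positivity) (by positivity),
      Real.log_div (by positivity) (by positivity)]
  have hpinsker : 2 * (c * μ - μ) ^ 2 ≤ D2 (c * μ) μ := pinsker_aux hμ hba ha1
  constructor
  · -- main bound
    set filt := (A.powersetCard β).filter (fun S => c * β * μ ≤ ∑ a ∈ S, p a) with hfilt
    have hcardP : ((A.powersetCard β).card : ℝ) = (n.choose β : ℝ) := by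
      rw [Finset.card_powersetCard]
    have hCpos : (0:ℝ) < ((A.powersetCard β).card : ℝ) := by
      rw [hcardP]
      exact_mod_cast Nat.choose_pos (le_of_lt hβA)
    -- Chernoff chain
    have step1 : (filt.card : ℝ) * Real.exp (t * (c * β * μ))
        ≤ ∑ S ∈ filt, Real.exp (t * ∑ a ∈ S, p a) := by
      rw [show (filt.card : ℝ) * Real.exp (t * (c * β * μ))
          = ∑ _S ∈ filt, Real.exp (t * (c * β * μ)) from by rw [Finset.sum_const]; ring]
      refine Finset.sum_le_sum (fun S hS => ?_)
      rw [hfilt, Finset.mem_filter] at hS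
      exact Real.exp_le_exp.mpr (mul_le_mul_of_nonneg_left hS.2 (le_of_lt ht0))
    have step2 : ∑ S ∈ filt, Real.exp (t * ∑ a ∈ S, p a)
        ≤ ∑ S ∈ A.powersetCard β, Real.exp (t * ∑ a ∈ S, p a) :=
      Finset.sum_le_sum_of_subset_of_nonneg (Finset.filter_subset _ _)
        (fun S _ _ => (Real.exp_pos _).le)
    have step3 : ∑ S ∈ A.powersetCard β, Real.exp (t * ∑ a ∈ S, p a)
        = ∑ S ∈ A.powersetCard β, ∏ a ∈ S, Real.exp (t * p a) := by
      refine Finset.sum_congr rfl (fun S _ => ?_)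
      rw [Finset.mul_sum, Real.exp_sum]
    have step4 : ∑ S ∈ A.powersetCard β, ∏ a ∈ S, Real.exp (t * p a)
        ≤ (n.choose β : ℝ) * ((∑ a ∈ A, Real.exp (t * p a)) / n) ^ β :=
      maclaurin_aux A _ (fun a _ => (Real.exp_pos _).le) β (le_of_lt hβA)
    have step5 : (∑ a ∈ A, Real.exp (t * p a)) / n ≤ 1 - μ + μ * Real.exp t := by
      rw [div_le_iff₀ hnR]
      calc ∑ a ∈ A, Real.exp (t * p a)
          ≤ ∑ a ∈ A, (1 - p a + p a * Real.exp t) := by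
            refine Finset.sum_le_sum (fun a ha => ?_)
            obtain ⟨h0, h1⟩ := hp a ha
            have := convexOn_exp.2 (Set.mem_univ (0:ℝ)) (Set.mem_univ t)
              (by linarith : (0:ℝ) ≤ 1 - p a) h0 (by ring)
            simp only [smul_eq_mul, mul_zero, add_zero, Real.exp_zero, mul_one, zero_add] at this
            calc Real.exp (t * p a) = Real.exp ((1 - p a) * 0 + p a * t) := by ring_nf
              _ ≤ (1 - p a) * 1 + p a * Real.exp t := by
                  simpa using this
              _ = 1 - p a + p a * Real.exp t := by ring
        _ = (n : ℝ) - (μ * n) + (μ * n) * Real.exp t := by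
            rw [Finset.sum_add_distrib, Finset.sum_sub_distrib, Finset.sum_const,
              ← Finset.sum_mul, hSp]
            simp [hn]
        _ = (1 - μ + μ * Real.exp t) * n := by ring
    have hbase : (0:ℝ) ≤ (∑ a ∈ A, Real.exp (t * p a)) / n :=
      div_nonneg (Finset.sum_nonneg (fun a _ => (Real.exp_pos _).le)) (le_of_lt hnR)
    have step6 : ((∑ a ∈ A, Real.exp (t * p a)) / n) ^ β
        ≤ (1 - μ + μ * Real.exp t) ^ β := pow_le_pow_left₀ hbase step5 β
    -- put chain together
    have chain : (filt.card : ℝ) * Real.exp (t * (c * β * μ))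
        ≤ (n.choose β : ℝ) * (1 - μ + μ * Real.exp t) ^ β := by
      calc (filt.card : ℝ) * Real.exp (t * (c * β * μ))
          ≤ ∑ S ∈ A.powersetCard β, ∏ a ∈ S, Real.exp (t * p a) :=
            (step1.trans step2).trans_eq step3
        _ ≤ (n.choose β : ℝ) * ((∑ a ∈ A, Real.exp (t * p a)) / n) ^ β := step4
        _ ≤ (n.choose β : ℝ) * (1 - μ + μ * Real.exp t) ^ β := by
            exact mul_le_mul_of_nonneg_left step6 (by positivity)
    -- compute the key identity
    have hfrac : 1 - μ + μ * Real.exp t = (1 - μ) / (1 - c * μ) := by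
      rw [hexpt, hR]
      have h1a' : 1 - c * μ ≠ 0 := h1a.ne'
      have hμ' : μ ≠ 0 := hμ.ne'
      have h1a'' : 1 - μ * c ≠ 0 := by rwa [mul_comm]
      field_simp
      ring
    have hfracpos : (0:ℝ) < (1 - μ) / (1 - c * μ) := by positivity
    have hpow : (1 - μ + μ * Real.exp t) ^ β
        = Real.exp ((β : ℝ) * (Real.log (1 - μ) - Real.log (1 - c * μ))) := by
      rw [hfrac, ← Real.exp_log hfracpos, ← Real.exp_nat_mul,
        Real.log_div (by positivity) (by positivity)]
    have hexpid : Real.exp (-(t * (c * β * μ)))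
          * Real.exp ((β : ℝ) * (Real.log (1 - μ) - Real.log (1 - c * μ)))
        = Real.exp (-(β : ℝ) * D2 (c * μ) μ) := by
      rw [← Real.exp_add]
      congr 1
      rw [hD2exp, htexp]
      ring
    rw [div_le_iff₀ hCpos, hcardP]
    calc (filt.card : ℝ)
        = (filt.card : ℝ) * Real.exp (t * (c * β * μ)) * Real.exp (-(t * (c * β * μ))) := by
          rw [mul_assoc, ← Real.exp_add]; simp
      _ ≤ (n.choose β : ℝ) * (1 - μ + μ * Real.exp t) ^ β * Real.exp (-(t * (c * β * μ))) :=
          mul_le_mul_of_nonneg_right chain (Real.exp_pos _).le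
      _ = Real.exp (-(β : ℝ) * D2 (c * μ) μ) * (n.choose β : ℝ) := by
          rw [← hexpid, hpow]; ring
  · -- Pinsker part
    rw [Real.exp_le_exp]
    have hβR : (0:ℝ) ≤ (β : ℝ) := Nat.cast_nonneg β
    have h2 : ((c - 1) * μ) ^ 2 = (c * μ - μ) ^ 2 := by ring
    nlinarith [mul_le_mul_of_nonneg_left hpinsker hβR]
end

section
/- Let A be a finite nonempty set, let β be a positive integer with β < |A|, let p : A → [0,1] with η = max_{a∈A} p(a) satisfying 0 < η < 1, and let μ = (1/|A|)·Σ_{a∈A} p(a) with μ > 0. Let B be a uniformly random β-element subset of A. Then for every real c with 1 < c < η/μ, Pr( Σ_{a∈B} p(a) ≥ c·β·μ ) ≤ exp( −β·D₂(c·μ/η ‖ μ/η) ) ≤ exp( −(c·β·μ/η)·( log(c) − 1/2 − 1/(2·(1 − c·μ/η)) ) ). -/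
open Real Finset

section Aux

variable {α : Type*} [DecidableEq α]

omit [DecidableEq α] in
lemma esymm_nonneg (A : Finset α) (k : ℕ) (x : α → ℝ) (hx : ∀ a ∈ A, 0 ≤ x a) :
    0 ≤ ∑ S ∈ A.powersetCard k, ∏ a ∈ S, x a :=
  Finset.sum_nonneg fun _ hS => Finset.prod_nonneg fun a ha =>
    hx a ((Finset.mem_powersetCard.1 hS).1 ha)

lemma esymm_insert (B : Finset α) {b : α} (hb : b ∉ B) (k : ℕ) (x : α → ℝ) :
    ∑ S ∈ (insert b B).powersetCard (k + 1), ∏ a ∈ S, x a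
      = (∑ S ∈ B.powersetCard (k + 1), ∏ a ∈ S, x a)
        + x b * ∑ S ∈ B.powersetCard k, ∏ a ∈ S, x a := by
  rw [Finset.powersetCard_succ_insert hb]
  rw [Finset.sum_union]
  · congr 1
    rw [Finset.sum_image, Finset.mul_sum]
    · refine Finset.sum_congr rfl fun S hS => ?_
      have hbS : b ∉ S := fun h => hb ((Finset.mem_powersetCard.1 hS).1 h)
      rw [Finset.prod_insert hbS]
    · intro S hS T hT hST
      have hbS : b ∉ S := fun h => hb ((Finset.mem_powersetCard.1 hS).1 h)
      have hbT : b ∉ T := fun h => hb ((Finset.mem_powersetCard.1 hT).1 h)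
      exact (Finset.insert_erase_invOn.2.injOn (by simpa using hbS) (by simpa using hbT)) hST
  · rw [Finset.disjoint_left]
    intro S hS hS'
    obtain ⟨T, hT, rfl⟩ := Finset.mem_image.1 hS'
    exact (fun h => hb ((Finset.mem_powersetCard.1 hS).1 h)) (Finset.mem_insert_self b T)

lemma powersetCard_erase_eq (A : Finset α) (a : α) (k : ℕ) :
    (A.erase a).powersetCard k = (A.powersetCard k).filter (fun S => a ∉ S) := by
  ext S
  simp only [Finset.mem_powersetCard, Finset.mem_filter, Finset.subset_erase]
  tauto

lemma sum_esymm_erase (A : Finset α) (k : ℕ) (x : α → ℝ) :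
    ∑ a ∈ A, ∑ S ∈ (A.erase a).powersetCard k, ∏ i ∈ S, x i
      = ((A.card - k : ℕ) : ℝ) * ∑ S ∈ A.powersetCard k, ∏ i ∈ S, x i := by
  have h : ∀ a, ∑ S ∈ (A.erase a).powersetCard k, ∏ i ∈ S, x i
      = ∑ S ∈ A.powersetCard k, if a ∉ S then ∏ i ∈ S, x i else 0 := by
    intro a
    rw [powersetCard_erase_eq, Finset.sum_filter]
  simp only [h]
  rw [Finset.sum_comm, Finset.mul_sum]
  refine Finset.sum_congr rfl fun S hS => ?_
  obtain ⟨hSA, hcard⟩ := Finset.mem_powersetCard.1 hS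
  rw [Finset.sum_ite, Finset.sum_const, Finset.sum_const_zero, add_zero, nsmul_eq_mul]
  congr 2
  rw [Finset.filter_not, Finset.filter_mem_eq_inter, Finset.inter_eq_right.2 hSA,
    Finset.card_sdiff_of_subset hSA, hcard]

lemma sum_mul_esymm_erase (A : Finset α) (k : ℕ) (x : α → ℝ) :
    ∑ a ∈ A, x a * ∑ S ∈ (A.erase a).powersetCard k, ∏ i ∈ S, x i
      = ((k + 1 : ℕ) : ℝ) * ∑ T ∈ A.powersetCard (k + 1), ∏ i ∈ T, x i := by
  have lhs : ∑ a ∈ A, x a * ∑ S ∈ (A.erase a).powersetCard k, ∏ i ∈ S, x i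
      = ∑ q ∈ A.sigma (fun a => (A.erase a).powersetCard k), x q.1 * ∏ i ∈ q.2, x i := by
    rw [Finset.sum_sigma]
    exact Finset.sum_congr rfl fun a _ => by rw [Finset.mul_sum]
  have rhs : ∑ q ∈ (A.powersetCard (k+1)).sigma (fun T => T), x q.2 * ∏ i ∈ q.1.erase q.2, x i
      = ((k + 1 : ℕ) : ℝ) * ∑ T ∈ A.powersetCard (k + 1), ∏ i ∈ T, x i := by
    rw [Finset.sum_sigma, Finset.mul_sum]
    refine Finset.sum_congr rfl fun T hT => ?_
    obtain ⟨hTA, hcard⟩ := Finset.mem_powersetCard.1 hT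
    have : ∀ a ∈ T, x a * ∏ i ∈ T.erase a, x i = ∏ i ∈ T, x i := fun a ha =>
      Finset.mul_prod_erase T x ha
    rw [Finset.sum_congr rfl this, Finset.sum_const, hcard, nsmul_eq_mul]
  rw [lhs, ← rhs]
  refine Finset.sum_nbij' (fun q => ⟨insert q.1 q.2, q.1⟩) (fun q => ⟨q.2, q.1.erase q.2⟩)
    ?_ ?_ ?_ ?_ ?_
  · rintro ⟨a, S⟩ hq
    simp only [Finset.mem_sigma, Finset.mem_powersetCard] at hq ⊢
    have ha := hq.1
    have hSA := hq.2.1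
    have hcard := hq.2.2
    have haS : a ∉ S := (Finset.subset_erase.1 hSA).2
    refine ⟨⟨?_, ?_⟩, Finset.mem_insert_self a S⟩
    · exact Finset.insert_subset ha ((Finset.subset_erase.1 hSA).1)
    · rw [Finset.card_insert_of_notMem haS, hcard]
  · rintro ⟨T, a⟩ hq
    simp only [Finset.mem_sigma, Finset.mem_powersetCard] at hq ⊢
    obtain ⟨⟨hTA, hcard⟩, haT⟩ := hq
    refine ⟨hTA haT, ?_, ?_⟩
    · rw [Finset.subset_erase]
      exact ⟨(Finset.erase_subset a T).trans hTA, Finset.notMem_erase a T⟩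
    · rw [Finset.card_erase_of_mem haT, hcard]
      omega
  · rintro ⟨a, S⟩ hq
    simp only [Finset.mem_sigma] at hq
    have haS : a ∉ S := (Finset.subset_erase.1 (Finset.mem_powersetCard.1 hq.2).1).2
    simp [Finset.erase_insert haS]
  · rintro ⟨T, a⟩ hq
    simp only [Finset.mem_sigma] at hq
    simp [Finset.insert_erase hq.2]
  · rintro ⟨a, S⟩ hq
    simp only [Finset.mem_sigma] at hq
    have haS : a ∉ S := (Finset.subset_erase.1 (Finset.mem_powersetCard.1 hq.2).1).2
    simp [Finset.erase_insert haS]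

/-- Maclaurin's inequality: the `k`-th elementary symmetric function of nonnegative reals
is at most `C(n,k)` times the `k`-th power of the mean. -/
theorem maclaurin (A : Finset α) (x : α → ℝ) (hx : ∀ a ∈ A, 0 ≤ x a) :
    ∀ k, k ≤ A.card →
      ∑ S ∈ A.powersetCard k, ∏ a ∈ S, x a
        ≤ (A.card.choose k : ℝ) * ((∑ a ∈ A, x a) / A.card) ^ k := by
  intro k
  induction k with
  | zero => intro _; simp
  | succ k IH =>
    intro hk1
    have hk : k ≤ A.card := Nat.le_of_succ_le hk1
    have hn0 : 0 < A.card := lt_of_lt_of_le (Nat.succ_pos k) hk1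
    have hnR : (0:ℝ) < A.card := by exact_mod_cast hn0
    set n := A.card with hn
    set s := ∑ a ∈ A, x a with hs
    have hs0 : 0 ≤ s := Finset.sum_nonneg fun a ha => hx a ha
    have hav : AntivaryOn x (fun a => ∑ S ∈ (A.erase a).powersetCard k, ∏ i ∈ S, x i)
        (A : Set α) := by
      intro a ha b hb hlt
      simp only at hlt
      rcases Nat.eq_zero_or_pos k with hk0 | hkpos
      · subst hk0; simp at hlt
      · obtain ⟨m, rfl⟩ := Nat.exists_eq_succ_of_ne_zero (Nat.pos_iff_ne_zero.1 hkpos)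
        have hab : a ≠ b := by rintro rfl; exact lt_irrefl _ hlt
        have hbA : b ∈ A.erase a := Finset.mem_erase.2 ⟨fun h => hab h.symm, hb⟩
        have haB : a ∈ A.erase b := Finset.mem_erase.2 ⟨hab, ha⟩
        set C := (A.erase a).erase b with hC
        have hbC : b ∉ C := Finset.notMem_erase b _
        have haC : a ∉ C := by
          rw [hC, Finset.erase_right_comm]; exact Finset.notMem_erase a _
        have h1 : A.erase a = insert b C := (Finset.insert_erase hbA).symm
        have h2 : A.erase b = insert a C := by
          rw [hC, Finset.erase_right_comm]; exact (Finset.insert_erase haB).symm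
        have hE : 0 ≤ ∑ S ∈ C.powersetCard m, ∏ i ∈ S, x i :=
          esymm_nonneg _ _ _ fun i hi =>
            hx i (Finset.mem_of_mem_erase (Finset.mem_of_mem_erase hi))
        rw [h1, esymm_insert C hbC m x] at hlt
        rw [h2, esymm_insert C haC m x] at hlt
        by_contra hcon
        push_neg at hcon
        nlinarith
    have cheb := hav.card_mul_sum_le_sum_mul_sum
    rw [sum_esymm_erase A k x, sum_mul_esymm_erase A k x] at cheb
    have IHk := IH hk
    have key : (n : ℝ) * (((k + 1 : ℕ) : ℝ) * ∑ T ∈ A.powersetCard (k+1), ∏ i ∈ T, x i)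
        ≤ (n : ℝ) * (((k + 1 : ℕ) : ℝ) * ((n.choose (k+1) : ℝ) * (s / n) ^ (k+1))) := by
      calc (n : ℝ) * (((k + 1 : ℕ) : ℝ) * ∑ T ∈ A.powersetCard (k+1), ∏ i ∈ T, x i)
          ≤ s * (((n - k : ℕ) : ℝ) * ∑ S ∈ A.powersetCard k, ∏ i ∈ S, x i) := cheb
        _ ≤ s * (((n - k : ℕ) : ℝ) * ((n.choose k : ℝ) * (s / n) ^ k)) := by
            apply mul_le_mul_of_nonneg_left _ hs0
            exact mul_le_mul_of_nonneg_left IHk (by positivity)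
        _ = (n : ℝ) * (((k + 1 : ℕ) : ℝ) * ((n.choose (k+1) : ℝ) * (s / n) ^ (k+1))) := by
            have hnat : (n - k) * n.choose k = (k + 1) * n.choose (k+1) := by
              rw [mul_comm (k+1), Nat.choose_succ_right_eq, mul_comm]
            have hchoose : ((n - k : ℕ) : ℝ) * (n.choose k : ℝ)
                = ((k + 1 : ℕ) : ℝ) * (n.choose (k+1) : ℝ) := by exact_mod_cast hnat
            calc s * (((n - k : ℕ) : ℝ) * ((n.choose k : ℝ) * (s / n) ^ k))
                = (((n - k : ℕ) : ℝ) * (n.choose k : ℝ)) * (s * (s / n) ^ k) := by ring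
              _ = (((k + 1 : ℕ) : ℝ) * (n.choose (k+1) : ℝ)) * (s * (s / n) ^ k) := by
                  rw [hchoose]
              _ = (n : ℝ) * (((k + 1 : ℕ) : ℝ) * ((n.choose (k+1) : ℝ) * (s / n) ^ (k+1))) := by
                  rw [pow_succ]
                  field_simp
    have hk1R : (0:ℝ) < ((k + 1 : ℕ) : ℝ) := by positivity
    have step1 := le_of_mul_le_mul_left key hnR
    exact le_of_mul_le_mul_left step1 hk1R

end Aux

set_option maxHeartbeats 2000000 in
open scoped Classical in
/-- Sharpened Hoeffding bound for sampling without replacement, with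
`η = max_{a∈A} p(a) ∈ (0,1)` and `1 < c < η/μ`:
`Pr(Σ_{a∈B} p(a) ≥ cβμ) ≤ exp(−β·D₂(cμ/η ‖ μ/η))
  ≤ exp(−(cβμ/η)(log c − 1/2 − 1/(2(1 − cμ/η))))`. -/
theorem hoeffding_without_replacement_sharpened {α : Type*} (A : Finset α) (hA : A.Nonempty)
    (β : ℕ) (hβ : 0 < β) (hβA : β < A.card)
    (p : α → ℝ) (hp : ∀ a ∈ A, 0 ≤ p a ∧ p a ≤ 1)
    (η : ℝ) (hηdef : η = A.sup' hA p) (hη0 : 0 < η) (hη1 : η < 1)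
    (μ : ℝ) (hμdef : μ = (∑ a ∈ A, p a) / A.card) (hμ : 0 < μ)
    (c : ℝ) (hc1 : 1 < c) (hc2 : c < η / μ) :
    ((((A.powersetCard β).filter (fun S => c * β * μ ≤ ∑ a ∈ S, p a)).card : ℝ)
        / ((A.powersetCard β).card : ℝ)
      ≤ Real.exp (-(β : ℝ) * D2 (c * μ / η) (μ / η))) ∧
    Real.exp (-(β : ℝ) * D2 (c * μ / η) (μ / η))
      ≤ Real.exp (-(c * (β : ℝ) * μ / η) *
          (Real.log c - 1 / 2 - 1 / (2 * (1 - c * μ / η)))) := by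
  classical
  have hηne : η ≠ 0 := ne_of_gt hη0
  have hμne : μ ≠ 0 := ne_of_gt hμ
  obtain ⟨a, ha_def⟩ : ∃ x : ℝ, x = c * μ / η := ⟨_, rfl⟩
  obtain ⟨b, hb_def⟩ : ∃ x : ℝ, x = μ / η := ⟨_, rfl⟩
  rw [← ha_def, ← hb_def]
  have hb0 : 0 < b := hb_def ▸ div_pos hμ hη0
  have ha1 : a < 1 := by
    rw [ha_def, div_lt_one hη0]
    calc c * μ < (η / μ) * μ := by exact mul_lt_mul_of_pos_right hc2 hμ
      _ = η := by field_simp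
  have hba : b < a := by
    rw [ha_def, hb_def]
    exact (div_lt_div_iff_of_pos_right hη0).2 ((lt_mul_iff_one_lt_left hμ).2 hc1)
  have ha0 : 0 < a := lt_trans hb0 hba
  have hb1 : b < 1 := lt_trans hba ha1
  have h1a : 0 < 1 - a := by linarith
  have h1b : 0 < 1 - b := by linarith
  -- the tilt parameter
  obtain ⟨r, hr_def⟩ : ∃ x : ℝ, x = a * (1 - b) / (b * (1 - a)) := ⟨_, rfl⟩
  have hden : 0 < b * (1 - a) := mul_pos hb0 h1a
  have hnum : 0 < a * (1 - b) := mul_pos ha0 h1b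
  have hr1 : 1 < r := by
    rw [hr_def, lt_div_iff₀ hden]
    have h' : b * (1 - a) < a * (1 - b) := by nlinarith [hba, mul_pos hb0 h1a]
    linarith only [h']
  have hr0 : 0 < r := lt_trans one_pos hr1
  have hlogr : 0 < Real.log r := Real.log_pos hr1
  obtain ⟨L, hL_def⟩ : ∃ x : ℝ, x = Real.log r / η := ⟨_, rfl⟩
  have hL0 : 0 ≤ L := hL_def ▸ le_of_lt (div_pos hlogr hη0)
  obtain ⟨y, hy_def⟩ : ∃ x : α → ℝ, x = fun i => Real.exp (L * p i) := ⟨_, rfl⟩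
  have hy0 : ∀ i, 0 ≤ y i := fun i => hy_def ▸ (Real.exp_pos (L * p i)).le
  have hnR : (0:ℝ) < A.card := by exact_mod_cast Nat.zero_lt_of_lt hβA
  have hsump : ∑ i ∈ A, p i = A.card * μ := by
    rw [hμdef, mul_comm, div_mul_cancel₀ _ (ne_of_gt hnR)]
  have hpη : ∀ i ∈ A, p i ≤ η := fun i hi => hηdef ▸ Finset.le_sup' p hi
  have hp0 : ∀ i ∈ A, 0 ≤ p i := fun i hi => (hp i hi).1
  -- pointwise convexity bound
  have hconv : ∀ i ∈ A, y i ≤ 1 + (p i / η) * (r - 1) := by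
    intro i hi
    have ht0 : 0 ≤ p i / η := div_nonneg (hp0 i hi) hη0.le
    have ht1 : p i / η ≤ 1 := (div_le_one hη0).2 (hpη i hi)
    have hyi : y i = r ^ (p i / η) := by
      simp only [hy_def]
      rw [Real.rpow_def_of_pos hr0]
      congr 1
      rw [hL_def]; ring
    have := Real.geom_mean_le_arith_mean2_weighted (by linarith : (0:ℝ) ≤ 1 - p i / η)
      ht0 zero_le_one hr0.le (by ring)
    rw [Real.one_rpow, one_mul, mul_one] at this
    rw [hyi]
    calc r ^ (p i / η) ≤ (1 - p i / η) + p i / η * r := this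
      _ = 1 + (p i / η) * (r - 1) := by ring
  have hsumy : ∑ i ∈ A, y i ≤ A.card * (1 + b * (r - 1)) := by
    calc ∑ i ∈ A, y i ≤ ∑ i ∈ A, (1 + (p i / η) * (r - 1)) := Finset.sum_le_sum hconv
      _ = A.card + (∑ i ∈ A, p i) / η * (r - 1) := by
          rw [Finset.sum_add_distrib, Finset.sum_const, nsmul_eq_mul, mul_one]
          rw [← Finset.sum_mul, ← Finset.sum_div]
      _ = A.card * (1 + b * (r - 1)) := by
          rw [hsump, hb_def]; ring
  -- Maclaurin bound on the MGF-sum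
  have hmac := maclaurin A y (fun i _ => hy0 i) β (le_of_lt hβA)
  have hmgf : ∑ S ∈ A.powersetCard β, ∏ i ∈ S, y i
      ≤ (A.card.choose β : ℝ) * (1 + b * (r - 1)) ^ β := by
    refine hmac.trans ?_
    apply mul_le_mul_of_nonneg_left _ (by positivity)
    apply pow_le_pow_left₀ (div_nonneg (Finset.sum_nonneg fun i _ => hy0 i) hnR.le)
    rw [div_le_iff₀ hnR]
    calc ∑ i ∈ A, y i ≤ A.card * (1 + b * (r - 1)) := hsumy
      _ = (1 + b * (r - 1)) * A.card := by ring
  -- Chernoff / Markov step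
  have hcher : ∀ S ∈ (A.powersetCard β).filter (fun S => c * β * μ ≤ ∑ i ∈ S, p i),
      Real.exp (L * (c * β * μ)) ≤ ∏ i ∈ S, y i := by
    intro S hS
    obtain ⟨hS1, hS2⟩ := Finset.mem_filter.1 hS
    have : ∏ i ∈ S, y i = Real.exp (L * ∑ i ∈ S, p i) := by
      simp only [hy_def]
      rw [← Real.exp_sum, Finset.mul_sum]
    rw [this]
    exact Real.exp_le_exp.2 (mul_le_mul_of_nonneg_left hS2 hL0)
  set F := (A.powersetCard β).filter (fun S => c * β * μ ≤ ∑ i ∈ S, p i) with hF_def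
  have hcount : (F.card : ℝ) * Real.exp (L * (c * β * μ))
      ≤ ∑ S ∈ A.powersetCard β, ∏ i ∈ S, y i := by
    calc (F.card : ℝ) * Real.exp (L * (c * β * μ))
        = F.card • Real.exp (L * (c * β * μ)) := by rw [nsmul_eq_mul]
      _ ≤ ∑ S ∈ F, ∏ i ∈ S, y i := Finset.card_nsmul_le_sum F _ _ hcher
      _ ≤ ∑ S ∈ A.powersetCard β, ∏ i ∈ S, y i := by
          apply Finset.sum_le_sum_of_subset_of_nonneg (Finset.filter_subset _ _)
          intro S hS _
          exact Finset.prod_nonneg fun i _ => hy0 i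
  -- the key algebraic identities
  obtain ⟨R, hR_def⟩ : ∃ x : ℝ, x = Real.exp (a * Real.log r) := ⟨_, rfl⟩
  have hRpos : 0 < R := hR_def ▸ Real.exp_pos (a * Real.log r)
  have hexpL : Real.exp (L * (c * β * μ)) = R ^ β := by
    rw [hR_def, ← Real.exp_nat_mul]
    congr 1
    rw [hL_def, ha_def]
    field_simp
  have hlogr_split : Real.log r = Real.log (a / b) + Real.log ((1 - b) / (1 - a)) := by
    rw [hr_def]
    rw [show a * (1 - b) / (b * (1 - a)) = (a / b) * ((1 - b) / (1 - a)) from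
      (div_mul_div_comm a b (1-b) (1-a)).symm]
    rw [Real.log_mul (by positivity) (by positivity)]
  have hlogflip : Real.log ((1 - a) / (1 - b)) = - Real.log ((1 - b) / (1 - a)) := by
    rw [← Real.log_inv]
    congr 1
    rw [inv_div]
  have hEident : 1 + b * (r - 1) = Real.exp (-(D2 a b)) * R := by
    have h1 : 1 + b * (r - 1) = (1 - b) / (1 - a) := by
      rw [hr_def]; field_simp; ring
    have h2 : Real.exp (-(D2 a b)) * R = Real.exp (-(D2 a b) + a * Real.log r) := by
      rw [hR_def, ← Real.exp_add]
    have h3 : -(D2 a b) + a * Real.log r = Real.log ((1 - b) / (1 - a)) := by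
      rw [D2, hlogr_split, hlogflip]
      ring
    rw [h1, h2, h3, Real.exp_log (by positivity)]
  -- conclude part 1
  have hCpos : (0:ℕ) < (A.powersetCard β).card := by
    rw [Finset.card_powersetCard]
    exact Nat.choose_pos (le_of_lt hβA)
  have hCposR : (0:ℝ) < ((A.powersetCard β).card : ℝ) := by exact_mod_cast hCpos
  have hCcard : (((A.powersetCard β).card : ℕ) : ℝ) = (A.card.choose β : ℝ) := by
    rw [Finset.card_powersetCard]
  constructor
  · rw [div_le_iff₀ hCposR]
    have hfinal : (F.card : ℝ) * R ^ β
        ≤ ((A.powersetCard β).card : ℝ) * (Real.exp (-(D2 a b))) ^ β * R ^ β := by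
      calc (F.card : ℝ) * R ^ β = (F.card : ℝ) * Real.exp (L * (c * β * μ)) := by
            rw [hexpL]
        _ ≤ ∑ S ∈ A.powersetCard β, ∏ i ∈ S, y i := hcount
        _ ≤ (A.card.choose β : ℝ) * (1 + b * (r - 1)) ^ β := hmgf
        _ = ((A.powersetCard β).card : ℝ) * (Real.exp (-(D2 a b))) ^ β * R ^ β := by
            rw [hCcard, hEident, mul_pow]
            ring
    have hcancel := le_of_mul_le_mul_right hfinal (by positivity : (0:ℝ) < R ^ β)
    calc (F.card : ℝ) ≤ ((A.powersetCard β).card : ℝ) * (Real.exp (-(D2 a b))) ^ β := hcancel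
      _ = Real.exp (-(β:ℝ) * D2 a b) * ((A.powersetCard β).card : ℝ) := by
          rw [← Real.exp_nat_mul]
          ring_nf
  · -- part 2 : comparison of the two exponential bounds
    apply Real.exp_le_exp.2
    have hac : a / b = c := by
      rw [ha_def, hb_def]
      field_simp
    have hcβμ : c * (β:ℝ) * μ / η = (β:ℝ) * a := by
      rw [ha_def]; ring
    rw [hcβμ]
    have hkey : a * (Real.log c - 1 / 2 - 1 / (2 * (1 - a))) ≤ D2 a b := by
      rw [← hac, D2]
      -- reduce to lower-bounding the second term of D2
      have hmono : (1 - a) * Real.log (1 - a) ≤ (1 - a) * Real.log ((1 - a) / (1 - b)) := by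
        apply mul_le_mul_of_nonneg_left _ h1a.le
        apply Real.log_le_log h1a
        rw [le_div_iff₀ h1b]
        exact mul_le_of_le_one_right h1a.le (by linarith only [hb0])
      have hstep : a * (- (1:ℝ) / 2 - 1 / (2 * (1 - a))) ≤ (1 - a) * Real.log (1 - a) := by
        obtain ⟨u, hu_def⟩ : ∃ x : ℝ, x = Real.sqrt (1 - a) := ⟨_, rfl⟩
        have hu2 : u ^ 2 = 1 - a := by rw [hu_def]; exact Real.sq_sqrt h1a.le
        have hu0 : 0 < u := by rw [hu_def]; exact Real.sqrt_pos.2 h1a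
        have hu1 : u < 1 := by
          by_contra hcon
          push_neg at hcon
          have h2 : 1*1 ≤ u*u := mul_le_mul hcon hcon one_pos.le (le_trans one_pos.le hcon)
          have h3 : (1:ℝ) ≤ u^2 := by rw [pow_two]; linarith only [h2]
          rw [hu2] at h3
          linarith only [h3, ha0]
        have hlogu : 1 - 1/u ≤ Real.log u := by
          have := Real.log_le_sub_one_of_pos (by positivity : (0:ℝ) < 1/u)
          rw [Real.log_div one_ne_zero (ne_of_gt hu0), Real.log_one] at this
          linarith only [this]
        have h2u : 2*u^2 - 2*u ≤ (1 - a) * Real.log (1 - a) := by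
          rw [← hu2, Real.log_pow]
          push_cast
          have hmul : u^2 * (2 * (1 - 1/u)) ≤ u^2 * (2 * Real.log u) := by
            apply mul_le_mul_of_nonneg_left _ (by positivity)
            linarith only [hlogu]
          have heq2 : u^2 * (2 * (1 - 1/u)) = 2*u^2 - 2*u := by
            field_simp
          linarith only [hmul, heq2]
        have hfrac : a * (- (1:ℝ) / 2 - 1 / (2 * (1 - a))) ≤ 2*u^2 - 2*u := by
          have hane : a = 1 - u^2 := by rw [hu2]; ring
          rw [hane]
          have hpoly : 0 ≤ 3*u^4 - 4*u^3 + 1 := by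
            have hfac : 3*u^4 - 4*u^3 + 1 = (u-1)^2 * (3*u^2+2*u+1) := by ring
            rw [hfac]
            positivity
          have heq : (2*u^2 - 2*u) - (1 - u^2) * (- (1:ℝ) / 2 - 1 / (2 * (1 - (1 - u^2))))
              = (3*u^4 - 4*u^3 + 1) / (2*u^2) := by
            field_simp
            ring
          have h0 : 0 ≤ (2*u^2 - 2*u) - (1 - u^2) * (- (1:ℝ) / 2 - 1 / (2 * (1 - (1 - u^2)))) := by
            rw [heq]; positivity
          linarith
        exact le_trans hfrac h2u
      linarith only [hmono, hstep]
    have hβ0 : (0:ℝ) ≤ (β:ℝ) := Nat.cast_nonneg β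
    have hfin := mul_le_mul_of_nonneg_left hkey hβ0
    linarith only [hfin]
end

section
/- Let m ≥ 2 and n be positive integers with n ≥ m, let ℓ = ⌊n/m⌋, let j be an integer with 0 ≤ j ≤ m−2, let n' = n − j·ℓ, and let γ ∈ (1/2,1). Then n'·I₂(γ ‖ ℓ/n') ≥ ℓ·( γ·log(m − j) − H₂(γ) ). -/
open Real

/-- Binary entropy (natural log). -/
noncomputable def H2 (a : ℝ) : ℝ := -a * Real.log a - (1 - a) * Real.log (1 - a)

/-- `I₂(a‖b) = b·D₂(a‖b) + (1−b)·D₂(b(1−a)/(1−b) ‖ b)`. -/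
noncomputable def I2 (a b : ℝ) : ℝ :=
  b * D2 a b + (1 - b) * D2 (b * (1 - a) / (1 - b)) b

lemma key (a b : ℝ) (ha0 : 0 < a) (ha1 : a < 1) (hb0 : 0 < b) (hb : b ≤ 1/2) :
    b * (a * Real.log b⁻¹ - H2 a) ≤ I2 a b := by
  have hb1 : b < 1 := by linarith
  have hv : (0:ℝ) < 1 - b := by linarith
  have h1a : (0:ℝ) < 1 - a := by linarith
  set c : ℝ := b * (1 - a) / (1 - b) with hc
  have hc0 : 0 < c := by rw [hc]; positivity
  have hc1 : c < 1 := by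
    rw [hc, div_lt_one hv]; nlinarith
  have h1c : (0:ℝ) < 1 - c := by linarith
  -- nonnegativity of the bracket
  have h1 : Real.log (1 - b) ≤ -b := by
    have := Real.log_le_sub_one_of_pos hv; linarith
  have h2 : -c ≤ (1 - c) * Real.log (1 - c) := by
    have h := Real.log_le_sub_one_of_pos (show (0:ℝ) < (1-c)⁻¹ by positivity)
    rw [Real.log_inv] at h
    have h' : -Real.log (1-c) ≤ (1-c)⁻¹ - 1 := h
    have : (1-c) * ((1-c)⁻¹ - 1) = c := by field_simp; ring
    nlinarith [mul_le_mul_of_nonneg_left h' (le_of_lt h1c)]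
  have h3 : c - b ≤ c * Real.log c - c * Real.log b := by
    have h := Real.log_le_sub_one_of_pos (show (0:ℝ) < b / c by positivity)
    rw [Real.log_div (ne_of_gt hb0) (ne_of_gt hc0)] at h
    have hbc : c * (b / c - 1) = b - c := by field_simp
    nlinarith [mul_le_mul_of_nonneg_left h (le_of_lt hc0)]
  have hA : 0 ≤ c * Real.log b⁻¹ - Real.log (1 - b) - H2 c := by
    rw [Real.log_inv, H2]; nlinarith
  -- the identity
  have hI : I2 a b = b * (a * Real.log b⁻¹ - H2 a)
      + (1 - b) * (c * Real.log b⁻¹ - Real.log (1 - b) - H2 c) := by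
    have e1 : Real.log c = Real.log b + Real.log (1 - a) - Real.log (1 - b) := by
      rw [hc, Real.log_div (by positivity) (ne_of_gt hv), Real.log_mul (ne_of_gt hb0) (ne_of_gt h1a)]
    simp only [I2, D2, H2]
    rw [Real.log_div (ne_of_gt ha0) (ne_of_gt hb0),
        Real.log_div (ne_of_gt h1a) (ne_of_gt hv),
        Real.log_div (ne_of_gt hc0) (ne_of_gt hb0),
        Real.log_div (ne_of_gt h1c) (ne_of_gt hv),
        Real.log_inv, e1]
    have hcb : c * (1 - b) = b * (1 - a) := by rw [hc]; field_simp
    nlinarith [hcb, sq_nonneg c]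
  rw [hI]
  nlinarith [mul_nonneg (le_of_lt hv) hA]

/-- For `m ≥ 2`, `n ≥ m`, `ℓ = ⌊n/m⌋`, `0 ≤ j ≤ m−2`, `n' = n − jℓ`, and `γ ∈ (1/2,1)`:
`n'·I₂(γ ‖ ℓ/n') ≥ ℓ·(γ·log(m−j) − H₂(γ))`. -/
theorem mutual_info_layer_bound (m n : ℕ) (hm : 2 ≤ m) (hn : m ≤ n)
    (j : ℕ) (hj : j ≤ m - 2)
    (ℓ n' : ℕ) (hℓ : ℓ = n / m) (hn' : n' = n - j * ℓ)
    (γ : ℝ) (hγ1 : 1 / 2 < γ) (hγ2 : γ < 1) :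
    (ℓ : ℝ) * (γ * Real.log ((m : ℝ) - (j : ℝ)) - H2 γ)
      ≤ (n' : ℝ) * I2 γ ((ℓ : ℝ) / (n' : ℝ)) := by
  have hγ0 : 0 < γ := by linarith
  have hℓ1 : 1 ≤ ℓ := by
    rw [hℓ]; exact (Nat.one_le_div_iff (by omega)).mpr hn
  have hmln : m * ℓ ≤ n := by
    rw [hℓ, mul_comm]; exact Nat.div_mul_le_self n m
  have hjm : j + 2 ≤ m := by omega
  have hsplit : (m - j) * ℓ + j * ℓ = m * ℓ := by
    rw [← Nat.add_mul]; congr 1; omega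
  have h2l : 2 * ℓ ≤ (m - j) * ℓ := Nat.mul_le_mul_right ℓ (by omega)
  have hjln : j * ℓ ≤ n := by omega
  have hmjn : (m - j) * ℓ ≤ n' := by omega
  have h2ln : 2 * ℓ ≤ n' := le_trans h2l hmjn
  have hn'0 : 0 < n' := by omega
  have hN : (0:ℝ) < (n' : ℝ) := by exact_mod_cast hn'0
  have hL : (0:ℝ) < (ℓ : ℝ) := by exact_mod_cast hℓ1
  set b : ℝ := (ℓ : ℝ) / (n' : ℝ) with hbdef
  have hb0 : 0 < b := by positivity
  have hb2 : b ≤ 1 / 2 := by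
    rw [hbdef, div_le_iff₀ hN]
    have : (2 * ℓ : ℝ) ≤ (n' : ℝ) := by exact_mod_cast h2ln
    linarith
  have hNb : (n' : ℝ) * b = (ℓ : ℝ) := by
    rw [hbdef]; field_simp
  have hcast : ((m : ℝ) - (j : ℝ)) = ((m - j : ℕ) : ℝ) := by
    rw [Nat.cast_sub (by omega)]
  have hmj2 : (0:ℝ) < (m : ℝ) - (j : ℝ) := by
    rw [hcast]; exact_mod_cast Nat.pos_of_ne_zero (by omega)
  have hlog : Real.log ((m : ℝ) - (j : ℝ)) ≤ Real.log b⁻¹ := by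
    apply Real.log_le_log hmj2
    rw [hbdef, inv_div, le_div_iff₀ hL]
    calc ((m : ℝ) - (j : ℝ)) * (ℓ : ℝ) = ((m - j : ℕ) : ℝ) * (ℓ : ℝ) := by rw [hcast]
      _ = (((m - j) * ℓ : ℕ) : ℝ) := by push_cast; ring
      _ ≤ (n' : ℝ) := by exact_mod_cast hmjn
  calc (ℓ : ℝ) * (γ * Real.log ((m : ℝ) - (j : ℝ)) - H2 γ)
      ≤ (ℓ : ℝ) * (γ * Real.log b⁻¹ - H2 γ) := by
        apply mul_le_mul_of_nonneg_left _ hL.le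
        have := mul_le_mul_of_nonneg_left hlog hγ0.le
        linarith
    _ = (n' : ℝ) * (b * (γ * Real.log b⁻¹ - H2 γ)) := by rw [← mul_assoc, hNb]
    _ ≤ (n' : ℝ) * I2 γ b := mul_le_mul_of_nonneg_left (key γ b hγ0 hγ2 hb0 hb2) hN.le
end
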